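/- arXiv:1608.06926 — 5 statements merged into one kernel-verified Lean document; each statement's English description precedes it below -/
import Mathlib

section
/- For a bounded linear operator u : E → F between Banach spaces, the sequence (x'_j ⊗ y_j) is unconditionally summable in L(E;F) if and only if sup over x in B_E and y' in B_{F'} of ∑_{j=1}^∞ |x'_j(x) y'(y_j)| is finite and lim_{m→∞} sup over x in B_E, y' in B_{F'} of ∑_{j=m}^∞ |x'_j(x) y'(y_j)| = 0. -/
open Filter NormedSpace Topology
open scoped ENNReal

set_option maxHeartbeats 1000000

section Helpers

section Perm
variable {G : Type*} [NormedAddCommGroup G]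

lemma exists_perm_not_conv (f : ℕ → G) {ε : ℝ} (hε : 0 < ε)
    (H : ∀ N, ∃ A : Finset ℕ, (∀ j ∈ A, N ≤ j) ∧ ε < ‖∑ j ∈ A, f j‖) :
    ∃ e : Equiv.Perm ℕ, ∀ L : G, ¬ Tendsto (fun N => ∑ j ∈ Finset.range N, f (e j)) atTop (𝓝 L) := by
  classical
  choose A hA1 hA2 using H
  -- block boundaries
  obtain ⟨b, hb0, hbs⟩ : ∃ b : ℕ → ℕ, b 0 = 0 ∧
      ∀ k, b (k + 1) = max (b k + 1) ((A (b k)).sup id + 1) :=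
    ⟨fun k => Nat.rec 0 (fun _ bk => max (bk + 1) ((A bk).sup id + 1)) k, rfl, fun k => rfl⟩
  have hblt : ∀ k, b k < b (k + 1) := fun k => by rw [hbs]; omega
  have hbk : ∀ k, k ≤ b k := by
    intro k; induction k with
    | zero => omega
    | succ k ih => have := hblt k; omega
  have hAsub : ∀ k, A (b k) ⊆ Finset.Ico (b k) (b (k + 1)) := by
    intro k j hj
    rw [Finset.mem_Ico]
    refine ⟨hA1 _ _ hj, ?_⟩
    have : j ≤ (A (b k)).sup id := Finset.le_sup (f := id) hj
    rw [hbs]; omega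
  have hcard : ∀ k, (A (b k)).card ≤ b (k + 1) - b k := by
    intro k
    have := Finset.card_le_card (hAsub k)
    rwa [Nat.card_Ico] at this
  -- block lists
  obtain ⟨L, hL⟩ : ∃ L : ℕ → List ℕ, ∀ k, L k =
      ((A (b k)).sort (· ≤ ·)) ++ ((Finset.Ico (b k) (b (k + 1)) \ A (b k)).sort (· ≤ ·)) :=
    ⟨_, fun k => rfl⟩
  have hLlen : ∀ k, (L k).length = b (k + 1) - b k := by
    intro k
    rw [hL]
    simp only [List.length_append, Finset.length_sort]
    rw [Finset.card_sdiff_of_subset (hAsub k), Nat.card_Ico]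
    have := hcard k; omega
  have hLmem : ∀ k a, a ∈ L k ↔ a ∈ Finset.Ico (b k) (b (k + 1)) := by
    intro k a
    rw [hL]
    simp only [List.mem_append, Finset.mem_sort, Finset.mem_sdiff]
    constructor
    · rintro (h | ⟨h, -⟩); exacts [hAsub k h, h]
    · intro h; by_cases hA : a ∈ A (b k)
      · exact Or.inl hA
      · exact Or.inr ⟨h, hA⟩
  have hLnd : ∀ k, (L k).Nodup := by
    intro k
    rw [hL, List.nodup_append]
    refine ⟨Finset.sort_nodup _ _, Finset.sort_nodup _ _, fun a ha c hc => ?_⟩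
    rw [Finset.mem_sort] at ha hc
    rintro rfl
    exact (Finset.mem_sdiff.1 hc).2 ha
  -- concatenated lists
  obtain ⟨ll, hll0, hlls⟩ : ∃ ll : ℕ → List ℕ, ll 0 = [] ∧ ∀ k, ll (k + 1) = ll k ++ L k :=
    ⟨fun k => Nat.rec [] (fun k l => l ++ L k) k, rfl, fun k => rfl⟩
  have hlllen : ∀ k, (ll k).length = b k := by
    intro k; induction k with
    | zero => rw [hll0, hb0]; rfl
    | succ k ih =>
      rw [hlls, List.length_append, ih, hLlen]
      have := hblt k; omega
  have hllmem : ∀ k a, a ∈ ll k ↔ a < b k := by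
    intro k; induction k with
    | zero => intro a; rw [hll0, hb0]; simp
    | succ k ih =>
      intro a
      rw [hlls, List.mem_append, ih, hLmem, Finset.mem_Ico]
      have := hblt k; omega
  have hllnd : ∀ k, (ll k).Nodup := by
    intro k; induction k with
    | zero => rw [hll0]; exact List.nodup_nil
    | succ k ih =>
      rw [hlls, List.nodup_append]
      refine ⟨ih, hLnd k, fun a ha c hc => ?_⟩
      rw [hllmem] at ha
      rw [hLmem, Finset.mem_Ico] at hc
      omega
  have hpref : ∀ {k m}, k ≤ m → ll k <+: ll m := by
    intro k m h
    induction m with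
    | zero => cases Nat.le_zero.1 h; exact List.prefix_refl _
    | succ m ih =>
      rcases Nat.lt_or_ge k (m + 1) with h' | h'
      · exact (ih (by omega)).trans ⟨L m, (hlls m).symm⟩
      · have : k = m + 1 := by omega
        subst this; exact List.prefix_refl _
  -- the permutation as a function
  obtain ⟨g, hg⟩ : ∃ g : ℕ → ℕ, ∀ j, g j = (ll (j + 1)).getD j 0 := ⟨_, fun j => rfl⟩
  have hjlen : ∀ j, j < (ll (j + 1)).length := by
    intro j; rw [hlllen]; have := hbk (j + 1); omega
  have g_eq : ∀ {k j}, j < b k → ∀ (h : j < (ll k).length), g j = (ll k)[j] := by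
    intro k j hj h
    rw [hg]
    rcases le_total (j + 1) k with h' | h'
    · rw [List.getD_eq_getElem _ _ (hjlen j)]
      exact ((hpref h').getElem (hjlen j))
    · rw [List.getD_eq_getElem _ _ (hjlen j)]
      exact ((hpref h').getElem h).symm
  have hginj : Function.Injective g := by
    intro j1 j2 hj
    set k := max j1 j2 + 1 with hk
    have h1 : j1 < b k := lt_of_lt_of_le (by omega) (hbk k)
    have h2 : j2 < b k := lt_of_lt_of_le (by omega) (hbk k)
    have e1 := g_eq h1 (by rw [hlllen]; exact h1)
    have e2 := g_eq h2 (by rw [hlllen]; exact h2)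
    rw [e1, e2] at hj
    exact ((hllnd k).getElem_inj_iff).1 hj
  have hgsurj : Function.Surjective g := by
    intro n
    have hn : n ∈ ll (n + 1) := (hllmem (n + 1) n).2 (lt_of_lt_of_le (by omega) (hbk (n + 1)))
    obtain ⟨i, hi, hin⟩ := List.mem_iff_getElem.1 hn
    have hib : i < b (n + 1) := by rwa [hlllen] at hi
    exact ⟨i, (g_eq hib hi).trans hin⟩
  refine ⟨Equiv.ofBijective g ⟨hginj, hgsurj⟩, fun Lim hT => ?_⟩
  have hT : Tendsto (fun N => ∑ j ∈ Finset.range N, f (g j)) atTop (𝓝 Lim) := hT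
  -- the key sum identity
  have himg : ∀ k, (Finset.Ico (b k) (b k + (A (b k)).card)).image g = A (b k) := by
    intro k
    have hck : b k + (A (b k)).card ≤ b (k + 1) := by have := hcard k; have := hblt k; omega
    apply Finset.Subset.antisymm
    · intro a ha
      obtain ⟨j, hj, rfl⟩ := Finset.mem_image.1 ha
      rw [Finset.mem_Ico] at hj
      have hjb : j < b (k + 1) := by omega
      have hjlen' : j < (ll (k + 1)).length := by rw [hlllen]; exact hjb
      rw [g_eq hjb hjlen']
      have h0 : (ll (k + 1))[j] = (L k).getD (j - b k) 0 := by
        rw [← List.getD_eq_getElem _ 0 hjlen', hlls,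
          List.getD_append_right _ _ _ _ (by rw [hlllen]; exact hj.1), hlllen]
      rw [h0, hL, List.getD_append _ _ _ _ (by rw [Finset.length_sort]; omega),
        List.getD_eq_getElem _ _ (by rw [Finset.length_sort]; omega)]
      rw [← Finset.mem_sort (· ≤ ·)]
      exact List.getElem_mem _
    · intro a ha
      have ha' : a ∈ (A (b k)).sort (· ≤ ·) := (Finset.mem_sort _).2 ha
      obtain ⟨i, hi, hia⟩ := List.mem_iff_getElem.1 ha'
      rw [Finset.length_sort] at hi
      refine Finset.mem_image.2 ⟨b k + i, Finset.mem_Ico.2 ⟨by omega, by omega⟩, ?_⟩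
      have hjb : b k + i < b (k + 1) := by omega
      have hjlen' : b k + i < (ll (k + 1)).length := by rw [hlllen]; exact hjb
      rw [g_eq hjb hjlen']
      have h1 : (ll (k + 1))[b k + i] = (L k).getD i 0 := by
        rw [← List.getD_eq_getElem _ 0 hjlen', hlls,
          List.getD_append_right _ _ _ _ (by rw [hlllen]; omega), hlllen]
        congr 1; omega
      rw [h1, hL, List.getD_append _ _ _ _ (by rw [Finset.length_sort]; omega),
        List.getD_eq_getElem _ _ (by rw [Finset.length_sort]; omega)]
      exact hia
  have hsum : ∀ k, ∑ j ∈ Finset.Ico (b k) (b k + (A (b k)).card), f (g j)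
      = ∑ a ∈ A (b k), f a := by
    intro k
    calc ∑ j ∈ Finset.Ico (b k) (b k + (A (b k)).card), f (g j)
        = ∑ a ∈ (Finset.Ico (b k) (b k + (A (b k)).card)).image g, f a :=
          (Finset.sum_image (fun a _ c _ h => hginj h)).symm
      _ = ∑ a ∈ A (b k), f a := by rw [himg k]
  -- contradiction with convergence
  have hbtop : Tendsto b atTop atTop := tendsto_atTop_mono hbk tendsto_id
  have hu : Tendsto (fun k => ∑ j ∈ Finset.range (b k), f (g j)) atTop (𝓝 Lim) :=
    hT.comp hbtop
  have hv : Tendsto (fun k => ∑ j ∈ Finset.range (b k + (A (b k)).card), f (g j))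
      atTop (𝓝 Lim) :=
    hT.comp (tendsto_atTop_mono (fun k => Nat.le_add_right (b k) (A (b k)).card) hbtop)
  have hdiff : Tendsto (fun k => ‖(∑ j ∈ Finset.range (b k + (A (b k)).card), f (g j))
      - ∑ j ∈ Finset.range (b k), f (g j)‖) atTop (𝓝 0) := by
    have h2 := hv.sub hu
    rw [sub_self] at h2
    simpa using h2.norm
  have hge : ∀ k, ε < ‖(∑ j ∈ Finset.range (b k + (A (b k)).card), f (g j))
      - ∑ j ∈ Finset.range (b k), f (g j)‖ := by
    intro k
    rw [← Finset.sum_Ico_eq_sub _ (Nat.le_add_right _ _), hsum k]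
    exact hA2 _
  have hev := hdiff.eventually (eventually_lt_nhds hε)
  obtain ⟨k, hk⟩ := hev.exists
  exact absurd (hge k) (not_lt.2 hk.le)
end Perm

section Aux
variable {E F : Type*} [NormedAddCommGroup E] [NormedSpace ℝ E]
  [NormedAddCommGroup F] [NormedSpace ℝ F]
  (x' : ℕ → StrongDual ℝ E) (y : ℕ → F)

noncomputable def TT (j : ℕ) : E →L[ℝ] F :=
  ContinuousLinearMap.smulRight (x' j : E →L[ℝ] ℝ) (y j)

noncomputable def SS (m : ℕ) : ℝ≥0∞ :=
  ⨆ (x : E) (_ : ‖x‖ ≤ 1) (y' : StrongDual ℝ F) (_ : ‖y'‖ ≤ 1),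
    ∑' j : ℕ, ENNReal.ofReal |x' (m + j) x * y' (y (m + j))|

lemma pair_eq (A : Finset ℕ) (x : E) (y' : StrongDual ℝ F) :
    ∑ j ∈ A, x' j x * y' (y j) = y' ((∑ j ∈ A, TT x' y j) x) := by
  rw [ContinuousLinearMap.sum_apply, map_sum]
  simp [TT, mul_comm]

lemma pair_bound (A : Finset ℕ) {x : E} {y' : StrongDual ℝ F} (hx : ‖x‖ ≤ 1) (hy : ‖y'‖ ≤ 1) :
    |∑ j ∈ A, x' j x * y' (y j)| ≤ ‖∑ j ∈ A, TT x' y j‖ := by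
  rw [pair_eq]
  calc |y' ((∑ j ∈ A, TT x' y j) x)| ≤ ‖y'‖ * ‖(∑ j ∈ A, TT x' y j) x‖ := y'.le_opNorm _
    _ ≤ ‖y'‖ * (‖∑ j ∈ A, TT x' y j‖ * ‖x‖) := by
        gcongr; exact (∑ j ∈ A, TT x' y j).le_opNorm x
    _ ≤ 1 * (‖∑ j ∈ A, TT x' y j‖ * 1) := by gcongr
    _ = ‖∑ j ∈ A, TT x' y j‖ := by ring

lemma abs_sum_bound {ε : ℝ} (A : Finset ℕ)
    (hA : ∀ B ⊆ A, ‖∑ j ∈ B, TT x' y j‖ ≤ ε)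
    {x : E} {y' : StrongDual ℝ F} (hx : ‖x‖ ≤ 1) (hy : ‖y'‖ ≤ 1) :
    ∑ j ∈ A, |x' j x * y' (y j)| ≤ 2 * ε := by
  classical
  set f : ℕ → ℝ := fun j => x' j x * y' (y j) with hf
  have hsplit : ∑ j ∈ A, |f j| = (∑ j ∈ A.filter (fun j => 0 ≤ f j), f j)
      - (∑ j ∈ A.filter (fun j => ¬ 0 ≤ f j), f j) := by
    rw [← Finset.sum_filter_add_sum_filter_not A (fun j => 0 ≤ f j) (fun j => |f j|)]
    rw [Finset.sum_congr rfl (fun j hj => abs_of_nonneg (Finset.mem_filter.1 hj).2),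
      Finset.sum_congr rfl (fun j hj => abs_of_neg (lt_of_not_ge (Finset.mem_filter.1 hj).2)),
      Finset.sum_neg_distrib]
    ring
  rw [hsplit]
  have h1 := (pair_bound x' y (A.filter (fun j => 0 ≤ f j)) hx hy).trans
    (hA _ (Finset.filter_subset _ _))
  have h2 := (pair_bound x' y (A.filter (fun j => ¬ 0 ≤ f j)) hx hy).trans
    (hA _ (Finset.filter_subset _ _))
  simp only [hf] at *
  linarith [(abs_le.1 h1).2, (abs_le.1 h2).1]

lemma abs_homog (A : Finset ℕ) {C : ℝ} (hC : 0 ≤ C)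
    (h : ∀ (x : E) (y' : StrongDual ℝ F), ‖x‖ ≤ 1 → ‖y'‖ ≤ 1 →
      ∑ j ∈ A, |x' j x * y' (y j)| ≤ C)
    (x : E) (y' : StrongDual ℝ F) :
    ∑ j ∈ A, |x' j x * y' (y j)| ≤ C * ‖x‖ * ‖y'‖ := by
  rcases eq_or_ne x 0 with rfl | hx
  · simp
  rcases eq_or_ne y' 0 with rfl | hy
  · simp
  have hxn : (0:ℝ) < ‖x‖ := norm_pos_iff.2 hx
  have hyn : (0:ℝ) < ‖y'‖ := norm_pos_iff.2 hy
  have := h (‖x‖⁻¹ • x) (‖y'‖⁻¹ • y') (by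
      rw [norm_smul, norm_inv, norm_norm]; exact le_of_eq (inv_mul_cancel₀ hxn.ne')) (by
      rw [norm_smul, norm_inv, norm_norm]; exact le_of_eq (inv_mul_cancel₀ hyn.ne'))
  have heq : ∀ j, |x' j (‖x‖⁻¹ • x) * (‖y'‖⁻¹ • y') (y j)|
      = ‖x‖⁻¹ * ‖y'‖⁻¹ * |x' j x * y' (y j)| := by
    intro j
    simp only [map_smul, ContinuousLinearMap.smul_apply, smul_eq_mul]
    rw [abs_mul, abs_mul, abs_mul, abs_inv, abs_norm, abs_inv, abs_norm]
    rw [abs_mul]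
    ring
  rw [Finset.sum_congr rfl (fun j _ => heq j), ← Finset.mul_sum] at this
  have hkey : ‖x‖⁻¹ * ‖y'‖⁻¹ * ∑ j ∈ A, |x' j x * y' (y j)| ≤ C := this
  have heq2 : ∑ j ∈ A, |x' j x * y' (y j)|
      = (‖x‖ * ‖y'‖) * (‖x‖⁻¹ * ‖y'‖⁻¹ * ∑ j ∈ A, |x' j x * y' (y j)|) := by
    field_simp
  rw [heq2]
  calc (‖x‖ * ‖y'‖) * (‖x‖⁻¹ * ‖y'‖⁻¹ * ∑ j ∈ A, |x' j x * y' (y j)|)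
      ≤ (‖x‖ * ‖y'‖) * C := mul_le_mul_of_nonneg_left hkey (by positivity)
    _ = C * ‖x‖ * ‖y'‖ := by ring

lemma opnorm_le (A : Finset ℕ) {C : ℝ} (hC : 0 ≤ C)
    (h : ∀ (x : E) (y' : StrongDual ℝ F), ‖x‖ ≤ 1 → ‖y'‖ ≤ 1 →
      ∑ j ∈ A, |x' j x * y' (y j)| ≤ C) :
    ‖∑ j ∈ A, TT x' y j‖ ≤ C := by
  apply ContinuousLinearMap.opNorm_le_bound _ hC
  intro x
  apply norm_le_dual_bound ℝ _ (by positivity)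
  intro y'
  rw [← pair_eq]
  calc ‖∑ j ∈ A, x' j x * y' (y j)‖ ≤ ∑ j ∈ A, |x' j x * y' (y j)| := by
        rw [Real.norm_eq_abs]; exact Finset.abs_sum_le_sum_abs _ _
    _ ≤ C * ‖x‖ * ‖y'‖ := abs_homog x' y A hC h x y'
    _ = C * ‖x‖ * ‖y'‖ := rfl

lemma S_le_ofReal {m : ℕ} {C : ℝ}
    (h : ∀ A : Finset ℕ, (∀ j ∈ A, m ≤ j) → ∀ (x : E) (y' : StrongDual ℝ F),
      ‖x‖ ≤ 1 → ‖y'‖ ≤ 1 → ∑ j ∈ A, |x' j x * y' (y j)| ≤ C) :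
    SS x' y m ≤ ENNReal.ofReal C := by
  refine iSup_le fun x => iSup_le fun hx => iSup_le fun y' => iSup_le fun hy => ?_
  rw [ENNReal.tsum_eq_iSup_sum]
  refine iSup_le fun s => ?_
  rw [← ENNReal.ofReal_sum_of_nonneg (fun j _ => abs_nonneg _)]
  apply ENNReal.ofReal_le_ofReal
  have himg : ∑ i ∈ s, |x' (m + i) x * y' (y (m + i))|
      = ∑ j ∈ s.image (fun i => m + i), |x' j x * y' (y j)| := by
    rw [Finset.sum_image (fun a _ b _ h => by omega)]
  rw [himg]
  exact h _ (fun j hj => by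
    obtain ⟨i, _, rfl⟩ := Finset.mem_image.1 hj; omega) x y' hx hy

lemma finsum_le_S {m : ℕ} (A : Finset ℕ) (hA : ∀ j ∈ A, m ≤ j)
    {x : E} {y' : StrongDual ℝ F} (hx : ‖x‖ ≤ 1) (hy : ‖y'‖ ≤ 1) :
    ENNReal.ofReal (∑ j ∈ A, |x' j x * y' (y j)|) ≤ SS x' y m := by
  have himg : ∑ j ∈ A, |x' j x * y' (y j)|
      = ∑ i ∈ A.image (fun j => j - m), |x' (m + i) x * y' (y (m + i))| := by
    rw [Finset.sum_image (fun a ha b hb h => by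
      have := hA a ha; have := hA b hb; omega)]
    refine Finset.sum_congr rfl fun j hj => ?_
    have h2 : m + (j - m) = j := by have := hA j hj; omega
    rw [h2]
  rw [himg, ENNReal.ofReal_sum_of_nonneg (fun j _ => abs_nonneg _)]
  refine le_trans ?_
    (le_iSup_of_le x (le_iSup_of_le hx (le_iSup_of_le y' (le_iSup_of_le hy le_rfl))))
  exact ENNReal.sum_le_tsum _

/-- the tail bound : vanishing implies `SS` small -/
lemma tail_S_le {N : ℕ} {ε : ℝ} (hε : 0 ≤ ε)
    (hV : ∀ A : Finset ℕ, (∀ j ∈ A, N ≤ j) → ‖∑ j ∈ A, TT x' y j‖ ≤ ε)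
    {m : ℕ} (hm : N ≤ m) : SS x' y m ≤ ENNReal.ofReal (2 * ε) := by
  apply S_le_ofReal
  intro A hA xx y' hx hy
  exact abs_sum_bound x' y A (fun B hB => hV B (fun j hj => le_trans hm (hA j (hB hj)))) hx hy

end Aux

end Helpers

theorem sigma_nuclear_unconditional_summability_characterization
    {E F : Type*} [NormedAddCommGroup E] [NormedSpace ℝ E] [CompleteSpace E]
    [NormedAddCommGroup F] [NormedSpace ℝ F] [CompleteSpace F]
    (x' : ℕ → StrongDual ℝ E) (y : ℕ → F) :
    (∀ e : Equiv.Perm ℕ, ∃ L : E →L[ℝ] F,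
        Tendsto (fun N => ∑ j ∈ Finset.range N,
          ContinuousLinearMap.smulRight (x' (e j) : E →L[ℝ] ℝ) (y (e j))) atTop (nhds L)) ↔
      ((⨆ (x : E) (_ : ‖x‖ ≤ 1) (y' : StrongDual ℝ F) (_ : ‖y'‖ ≤ 1),
          ∑' j : ℕ, ENNReal.ofReal |x' j x * y' (y j)|) < ⊤ ∧
        Tendsto (fun m : ℕ => ⨆ (x : E) (_ : ‖x‖ ≤ 1) (y' : StrongDual ℝ F) (_ : ‖y'‖ ≤ 1),
          ∑' j : ℕ, ENNReal.ofReal |x' (m + j) x * y' (y (m + j))|) atTop (nhds 0)) := by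
  constructor
  · intro h
    -- vanishing property
    have hV : ∀ ε : ℝ, 0 < ε → ∃ N : ℕ, ∀ A : Finset ℕ, (∀ j ∈ A, N ≤ j) →
        ‖∑ j ∈ A, TT x' y j‖ ≤ ε := by
      by_contra hc
      push_neg at hc
      obtain ⟨ε, hε, hc⟩ := hc
      obtain ⟨e, he⟩ := exists_perm_not_conv (TT x' y) hε (fun N => by
        obtain ⟨A, hA1, hA2⟩ := hc N
        exact ⟨A, hA1, hA2⟩)
      obtain ⟨L, hL⟩ := h e
      exact he L hL
    constructor
    · -- finiteness of SS 0
      obtain ⟨N, hN⟩ := hV 1 one_pos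
      have hSS : SS x' y 0 ≤ (∑ j ∈ Finset.range N, ENNReal.ofReal (‖x' j‖ * ‖y j‖))
          + ENNReal.ofReal (2 * 1) := by
        refine iSup_le fun x => iSup_le fun hx => iSup_le fun y' => iSup_le fun hy => ?_
        have hsplit := (Summable.sum_add_tsum_nat_add' (f := fun j =>
          ENNReal.ofReal |x' (0 + j) x * y' (y (0 + j))|) (k := N) ENNReal.summable).symm
        rw [hsplit]
        gcongr with j hj
        · -- head
          rw [zero_add, abs_mul]
          calc |x' j x| * |y' (y j)| ≤ (‖x' j‖ * ‖x‖) * (‖y'‖ * ‖y j‖) := by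
                apply mul_le_mul ((x' j).le_opNorm x) (y'.le_opNorm (y j))
                  (abs_nonneg _) (by positivity)
            _ ≤ (‖x' j‖ * 1) * (1 * ‖y j‖) := by gcongr
            _ = ‖x' j‖ * ‖y j‖ := by ring
        · -- tail
          calc ∑' j, ENNReal.ofReal |x' (0 + (j + N)) x * y' (y (0 + (j + N)))|
              = ∑' j, ENNReal.ofReal |x' (N + j) x * y' (y (N + j))| := by
                refine tsum_congr fun j => ?_
                rw [zero_add, add_comm j N]
            _ ≤ SS x' y N :=
                le_iSup_of_le x (le_iSup_of_le hx (le_iSup_of_le y' (le_iSup_of_le hy le_rfl)))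
            _ ≤ ENNReal.ofReal (2 * 1) := tail_S_le x' y zero_le_one hN le_rfl
      have hfin : (∑ j ∈ Finset.range N, ENNReal.ofReal (‖x' j‖ * ‖y j‖))
          + ENNReal.ofReal (2 * 1) < ⊤ := by
        apply ENNReal.add_lt_top.2
        exact ⟨ENNReal.sum_lt_top.2 fun j _ => ENNReal.ofReal_lt_top, ENNReal.ofReal_lt_top⟩
      have : SS x' y 0 < ⊤ := lt_of_le_of_lt hSS hfin
      have hzero : SS x' y 0 = ⨆ (x : E) (_ : ‖x‖ ≤ 1) (y' : StrongDual ℝ F) (_ : ‖y'‖ ≤ 1),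
          ∑' j : ℕ, ENNReal.ofReal |x' j x * y' (y j)| := by
        simp only [SS, zero_add]
      rwa [hzero] at this
    · -- tendsto 0
      have : Tendsto (SS x' y) atTop (𝓝 0) := by
        rw [ENNReal.tendsto_atTop_zero]
        intro ε hε
        rcases eq_or_ne ε ⊤ with rfl | hεtop
        · exact ⟨0, fun n _ => le_top⟩
        have hδ : (0:ℝ) < ε.toReal := ENNReal.toReal_pos hε.ne' hεtop
        obtain ⟨N, hN⟩ := hV (ε.toReal / 2) (by positivity)
        refine ⟨N, fun m hm => ?_⟩
        calc SS x' y m ≤ ENNReal.ofReal (2 * (ε.toReal / 2)) :=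
              tail_S_le x' y (by positivity) hN hm
          _ = ENNReal.ofReal ε.toReal := by ring_nf
          _ = ε := ENNReal.ofReal_toReal hεtop
      exact this
  · rintro ⟨-, h2⟩
    have h2' : Tendsto (SS x' y) atTop (𝓝 0) := h2
    -- vanishing
    have hV : ∀ ε : ℝ, 0 < ε → ∃ m : ℕ, ∀ A : Finset ℕ, (∀ j ∈ A, m ≤ j) →
        ‖∑ j ∈ A, TT x' y j‖ ≤ ε := by
      intro ε hε
      have := (h2'.eventually (gt_mem_nhds (ENNReal.ofReal_pos.2 hε))).exists
      obtain ⟨m, hm⟩ := this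
      refine ⟨m, fun A hA => ?_⟩
      apply opnorm_le x' y A hε.le
      intro xx y' hx hy
      have := (finsum_le_S x' y A hA hx hy).trans hm.le
      rwa [ENNReal.ofReal_le_ofReal_iff hε.le] at this
    have hsum : Summable (TT x' y) := by
      rw [summable_iff_vanishing]
      intro s hs
      obtain ⟨ε, hε, hball⟩ := Metric.mem_nhds_iff.1 hs
      obtain ⟨m, hm⟩ := hV (ε / 2) (by positivity)
      refine ⟨Finset.range m, fun t ht => ?_⟩
      apply hball
      rw [Metric.mem_ball, dist_zero_right]
      have : ∀ j ∈ t, m ≤ j := by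
        intro j hj
        by_contra hjm
        exact (Finset.disjoint_left.1 ht) hj (Finset.mem_range.2 (by omega))
      exact lt_of_le_of_lt (hm t this) (by linarith)
    intro e
    have : Summable (TT x' y ∘ e) := (Equiv.summable_iff e).2 hsum
    exact ⟨_, this.hasSum.tendsto_sum_nat⟩
end

section
/- The finite type n-linear operators are dense in the space of σ(p)-nuclear n-linear operators with respect to the norm ‖·‖_{σ(p)}. -/
open Filter NormedSpace MeasureTheory
open scoped ENNReal

noncomputable section

variable {n : ℕ} {E : Fin n → Type*} [∀ i, NormedAddCommGroup (E i)] [∀ i, NormedSpace ℝ (E i)]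
variable {F : Type*} [NormedAddCommGroup F] [NormedSpace ℝ F]

/-- Conjugate exponent of `p` as an element of `ℝ≥0∞` (`⊤` when `p = 1`). -/
def conjExp (p : ℝ) : ℝ≥0∞ := if p = 1 then ⊤ else ENNReal.ofReal (p / (p - 1))

/-- The rank-one `n`-linear operator `x'_1 ⊗ ⋯ ⊗ x'_n ⊗ y`. -/
def rankOne (x' : ∀ i, StrongDual ℝ (E i)) (y : F) : ContinuousMultilinearMap ℝ E F :=
  (ContinuousMultilinearMap.mkPiRing ℝ (Fin n) y).compContinuousLinearMap x'

/-- The tail suprema appearing in the definition of a σ(p)-nuclear representation: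
`sup_{xᵢ ∈ B_{Eᵢ}, y' ∈ B_{F'}} (∑_{j ≥ m} |x'_{1j}(x_1) ⋯ x'_{nj}(x_n) y'(y_j)|^p)^{1/p}`. -/
def nucSup (p : ℝ) (x' : ℕ → ∀ i, StrongDual ℝ (E i)) (y : ℕ → F) (m : ℕ) : ℝ≥0∞ :=
  ⨆ (x : ∀ i, E i) (_ : ∀ i, ‖x i‖ ≤ 1) (y' : StrongDual ℝ F) (_ : ‖y'‖ ≤ 1),
    (∑' j : ℕ, ENNReal.ofReal |(∏ i, x' (m + j) i (x i)) * y' (y (m + j))| ^ p) ^ (1 / p)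

/-- `A = ∑_j λ_j x'_{1j} ⊗ ⋯ ⊗ x'_{nj} ⊗ y_j` is a σ(p)-nuclear representation of `A`. -/
def IsNucRep (p : ℝ) (A : ContinuousMultilinearMap ℝ E F)
    (lam : ℕ → ℝ) (x' : ℕ → ∀ i, StrongDual ℝ (E i)) (y : ℕ → F) : Prop :=
  Memℓp lam (conjExp p) ∧
  (∀ v : ∀ i, E i, A v = ∑' j : ℕ, (lam j * ∏ i, x' j i (v i)) • y j) ∧
  nucSup p x' y 0 < ⊤ ∧
  Tendsto (fun m => nucSup p x' y m) atTop (nhds 0)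

/-- σ(p)-nuclear multilinear operators. -/
def SigmaNuclear (p : ℝ) (A : ContinuousMultilinearMap ℝ E F) : Prop :=
  ∃ lam x' y, IsNucRep p A lam x' y

/-- The σ(p)-nuclear norm: infimum of `‖(λ_j)‖_{p'} · sup‖⋯‖` over all σ(p)-nuclear
representations. -/
def nucNorm (p : ℝ) (A : ContinuousMultilinearMap ℝ E F) : ℝ :=
  sInf { r | ∃ lam x' y, ∃ h : Memℓp lam (conjExp p), IsNucRep p A lam x' y ∧
    r = ‖(⟨lam, h⟩ : lp (fun _ : ℕ => ℝ) (conjExp p))‖ * (nucSup p x' y 0).toReal }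

/-- Finite type multilinear operators. -/
def FiniteType (A : ContinuousMultilinearMap ℝ E F) : Prop :=
  ∃ (m : ℕ) (lam : ℕ → ℝ) (x' : ℕ → ∀ i, StrongDual ℝ (E i)) (y : ℕ → F),
    ∀ v : ∀ i, E i, A v = ∑ j ∈ Finset.range m, (lam j * ∏ i, x' j i (v i)) • y j

/-! ### Auxiliary lemmas -/

lemma vandermonde_solve {N : ℕ} (t : Fin N → ℝ) (ht : Function.Injective t) :
    ∃ B : Fin N → Fin N → ℝ, ∀ (V : Type*) [AddCommGroup V] [Module ℝ V]
      (a : Fin N → V) (k : Fin N), a k = ∑ i, B k i • (∑ l : Fin N, t i ^ (l : ℕ) • a l) := by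
  set M : Matrix (Fin N) (Fin N) ℝ := Matrix.vandermonde t with hM
  have hdet : IsUnit M.det := by
    rw [isUnit_iff_ne_zero, Matrix.det_vandermonde]
    refine Finset.prod_ne_zero_iff.2 fun i _ => Finset.prod_ne_zero_iff.2 fun j hj => ?_
    have hij : i ≠ j := (Finset.mem_Ioi.mp hj).ne'.symm
    exact sub_ne_zero.2 fun h => hij (ht h.symm)
  refine ⟨fun k i => M⁻¹ k i, fun V _ _ a k => ?_⟩
  have h1 : M⁻¹ * M = 1 := Matrix.nonsing_inv_mul M hdet
  calc a k = ∑ l : Fin N, (1 : Matrix (Fin N) (Fin N) ℝ) k l • a l := by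
        simp [Matrix.one_apply]
    _ = ∑ l : Fin N, (∑ i, M⁻¹ k i * M i l) • a l := by rw [← h1]; simp [Matrix.mul_apply]
    _ = ∑ l : Fin N, ∑ i, (M⁻¹ k i * M i l) • a l := by simp [Finset.sum_smul]
    _ = ∑ i, ∑ l : Fin N, (M⁻¹ k i * M i l) • a l := Finset.sum_comm
    _ = ∑ i, M⁻¹ k i • ∑ l : Fin N, t i ^ (l : ℕ) • a l := by
        refine Finset.sum_congr rfl fun i _ => ?_
        rw [Finset.smul_sum]
        refine Finset.sum_congr rfl fun l _ => ?_
        rw [mul_smul, hM, Matrix.vandermonde_apply]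

lemma sum_powerset_group {β : Type*} [AddCommMonoid β] (g : Finset (Fin n) → β) :
    ∑ S ∈ (Finset.univ : Finset (Fin n)).powerset, g S
      = ∑ k ∈ Finset.range (n + 1), ∑ S ∈ Finset.powersetCard k Finset.univ, g S := by
  classical
  rw [Finset.powerset_card_disjiUnion]; erw [Finset.sum_disjiUnion]
  have : (Finset.univ : Finset (Fin n)).card = n := by simp
  rw [this]

lemma scalar_expand (t : ℝ) (a b : Fin n → ℝ) :
    ∏ i, (a i + t * b i) = ∑ k ∈ Finset.range (n + 1), t ^ k *
      ∑ S ∈ Finset.powersetCard k Finset.univ,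
        (∏ i ∈ S, b i) * ∏ i ∈ Finset.univ \ S, a i := by
  classical
  calc ∏ i, (a i + t * b i) = ∏ i, (t * b i + a i) := by
        refine Finset.prod_congr rfl fun i _ => add_comm _ _
    _ = ∑ S ∈ (Finset.univ : Finset (Fin n)).powerset,
          (∏ i ∈ S, (t * b i)) * ∏ i ∈ Finset.univ \ S, a i :=
        Finset.prod_add _ _ _
    _ = ∑ S ∈ (Finset.univ : Finset (Fin n)).powerset,
          t ^ S.card * ((∏ i ∈ S, b i) * ∏ i ∈ Finset.univ \ S, a i) := by
        refine Finset.sum_congr rfl fun S _ => ?_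
        rw [Finset.prod_mul_distrib, Finset.prod_const]; ring
    _ = ∑ k ∈ Finset.range (n + 1), ∑ S ∈ Finset.powersetCard k Finset.univ,
          t ^ S.card * ((∏ i ∈ S, b i) * ∏ i ∈ Finset.univ \ S, a i) :=
        sum_powerset_group _
    _ = ∑ k ∈ Finset.range (n + 1), t ^ k *
          ∑ S ∈ Finset.powersetCard k Finset.univ,
            (∏ i ∈ S, b i) * ∏ i ∈ Finset.univ \ S, a i := by
        refine Finset.sum_congr rfl fun k _ => ?_
        rw [Finset.mul_sum]
        refine Finset.sum_congr rfl fun S hS => ?_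
        rw [(Finset.mem_powersetCard.mp hS).2]

lemma multilinear_expand (A : ContinuousMultilinearMap ℝ E F) (t : ℝ) (w u : ∀ i, E i) :
    A (fun i => w i + t • u i) = ∑ k ∈ Finset.range (n + 1), t ^ k •
      ∑ S ∈ Finset.powersetCard k Finset.univ, A (S.piecewise u w) := by
  classical
  have h0 : (fun i => w i + t • u i) = ((fun i => t • u i) + w) := by
    funext i; simp [add_comm]
  rw [h0]
  have h1 : A ((fun i => t • u i) + w)
      = ∑ S : Finset (Fin n), A (S.piecewise (fun i => t • u i) w) :=
    A.toMultilinearMap.map_add_univ _ _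
  rw [h1]
  have h2 : ∀ S : Finset (Fin n),
      A (S.piecewise (fun i => t • u i) w) = t ^ S.card • A (S.piecewise u w) := by
    intro S
    have e : S.piecewise (fun i => t • u i) w
        = S.piecewise (fun i => t • (S.piecewise u w) i) (S.piecewise u w) := by
      funext i
      by_cases hi : i ∈ S <;>
        simp [Finset.piecewise_eq_of_mem _ _ _, Finset.piecewise_eq_of_notMem _ _ _, hi]
    have h3 := A.toMultilinearMap.map_piecewise_smul (fun _ : Fin n => t) (S.piecewise u w) S
    simp only [ContinuousMultilinearMap.coe_coe] at h3
    rw [e, h3, Finset.prod_const]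
  calc ∑ S : Finset (Fin n), A (S.piecewise (fun i => t • u i) w)
      = ∑ S ∈ (Finset.univ : Finset (Fin n)).powerset,
          t ^ S.card • A (S.piecewise u w) := by
        rw [Finset.powerset_univ]
        exact Finset.sum_congr rfl fun S _ => h2 S
    _ = ∑ k ∈ Finset.range (n + 1), ∑ S ∈ Finset.powersetCard k Finset.univ,
          t ^ S.card • A (S.piecewise u w) := sum_powerset_group _
    _ = ∑ k ∈ Finset.range (n + 1), t ^ k •
          ∑ S ∈ Finset.powersetCard k Finset.univ, A (S.piecewise u w) := by
        refine Finset.sum_congr rfl fun k _ => ?_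
        rw [Finset.smul_sum]
        refine Finset.sum_congr rfl fun S hS => ?_
        rw [(Finset.mem_powersetCard.mp hS).2]

/-- Pick `N` distinct points in an infinite set of reals. -/
lemma exists_inj_of_infinite {N : ℕ} {Z : Set ℝ} (hZ : Z.Infinite) :
    ∃ t : Fin N → ℝ, Function.Injective t ∧ ∀ i, t i ∈ Z := by
  let e : ℕ ↪ Z := Set.Infinite.natEmbedding Z hZ
  refine ⟨fun i => (e i.val : ℝ), ?_, fun i => (e i.val).2⟩
  intro a b hab
  exact Fin.val_injective (e.injective (Subtype.ext hab))

/-- If some evaluation of the representing series of `A` fails to be summable, then (because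
`tsum` of a non-summable family is zero, and by a Vandermonde interpolation argument) the
operator `A` must vanish identically. -/
lemma rep_eq_zero_of_not_summable
    (A : ContinuousMultilinearMap ℝ E F) (lam : ℕ → ℝ) (x' : ℕ → ∀ i, StrongDual ℝ (E i)) (y : ℕ → F)
    (hrep : ∀ v : ∀ i, E i, A v = ∑' j : ℕ, (lam j * ∏ i, x' j i (v i)) • y j)
    (v₀ : ∀ i, E i) (hv₀ : ¬ Summable fun j => (lam j * ∏ i, x' j i (v₀ i)) • y j) :
    A = 0 := by
  classical
  ext w
  rw [ContinuousMultilinearMap.zero_apply]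
  set u : ∀ i, E i := fun i => v₀ i - w i with hu
  set c : ℕ → ℕ → F := fun k j =>
    (∑ S ∈ Finset.powersetCard k Finset.univ,
      lam j * ((∏ i ∈ S, x' j i (u i)) * ∏ i ∈ Finset.univ \ S, x' j i (w i))) • y j with hc
  have hterm : ∀ (t : ℝ) (j : ℕ),
      (lam j * ∏ i, x' j i (w i + t • u i)) • y j
        = ∑ k ∈ Finset.range (n + 1), t ^ k • c k j := by
    intro t j
    have h1 : ∀ i, x' j i (w i + t • u i) = x' j i (w i) + t * x' j i (u i) := by
      intro i; simp
    have h2 : ∏ i, x' j i (w i + t • u i)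
        = ∑ k ∈ Finset.range (n + 1), t ^ k *
            ∑ S ∈ Finset.powersetCard k Finset.univ,
              (∏ i ∈ S, x' j i (u i)) * ∏ i ∈ Finset.univ \ S, x' j i (w i) := by
      calc ∏ i, x' j i (w i + t • u i) = ∏ i, (x' j i (w i) + t * x' j i (u i)) :=
            Finset.prod_congr rfl fun i _ => h1 i
        _ = _ := scalar_expand t _ _
    rw [h2, Finset.mul_sum, Finset.sum_smul]
    refine Finset.sum_congr rfl fun k _ => ?_
    simp only [hc]
    rw [smul_smul]
    congr 1
    simp only [Finset.mul_sum]
    exact Finset.sum_congr rfl fun S _ => by ring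
  have hfin : {t : ℝ | Summable fun j => (lam j * ∏ i, x' j i (w i + t • u i)) • y j}.Finite := by
    by_contra hinf
    have hinf' : {t : ℝ | Summable fun j =>
        (lam j * ∏ i, x' j i (w i + t • u i)) • y j}.Infinite := hinf
    obtain ⟨t, htinj, htmem⟩ := exists_inj_of_infinite (N := n + 1) hinf'
    obtain ⟨B, hB⟩ := vandermonde_solve t htinj
    have hsum_t : ∀ i : Fin (n + 1),
        Summable fun j => ∑ l : Fin (n + 1), t i ^ (l : ℕ) • c (l : ℕ) j := by
      intro i
      have := htmem i
      rw [Set.mem_setOf_eq] at this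
      refine this.congr fun j => ?_
      rw [hterm (t i) j, ← Fin.sum_univ_eq_sum_range (fun k => t i ^ k • c k j)]
    have hck : ∀ k : Fin (n + 1), Summable fun j => c (k : ℕ) j := by
      intro k
      have hpt : ∀ j : ℕ, c (k : ℕ) j
          = ∑ i, B k i • (∑ l : Fin (n + 1), t i ^ (l : ℕ) • c (l : ℕ) j) := by
        intro j
        exact hB F (fun l => c (l : ℕ) j) k
      refine Summable.congr ?_ fun j => (hpt j).symm
      exact summable_sum fun i _ => (hsum_t i).const_smul (B k i)
    apply hv₀
    have hv0 : ∀ j, (lam j * ∏ i, x' j i (v₀ i)) • y j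
        = ∑ k ∈ Finset.range (n + 1), (1 : ℝ) ^ k • c k j := by
      intro j
      have hw : ∀ i, v₀ i = w i + (1 : ℝ) • u i := fun i => by simp [hu]
      rw [← hterm 1 j]
      simp only [hw]
    refine Summable.congr ?_ fun j => (hv0 j).symm
    rw [show (fun j => ∑ k ∈ Finset.range (n + 1), (1 : ℝ) ^ k • c k j)
        = fun j => ∑ k : Fin (n + 1), (1 : ℝ) ^ (k : ℕ) • c (k : ℕ) j from
      funext fun j => (Fin.sum_univ_eq_sum_range _ _).symm]
    exact summable_sum fun k _ => Summable.congr (hck k) fun j => by simp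
  have hZ : {t : ℝ | Summable fun j => (lam j * ∏ i, x' j i (w i + t • u i)) • y j}ᶜ.Infinite :=
    hfin.infinite_compl
  obtain ⟨t, htinj, htmem⟩ := exists_inj_of_infinite (N := n + 1) hZ
  have hAz : ∀ i : Fin (n + 1),
      ∑ l : Fin (n + 1), t i ^ (l : ℕ) •
        (∑ S ∈ Finset.powersetCard (l : ℕ) Finset.univ, A (S.piecewise u w)) = 0 := by
    intro i
    have h1 : A (fun i' => w i' + t i • u i') = 0 := by
      rw [hrep]
      exact tsum_eq_zero_of_not_summable (htmem i)
    rw [multilinear_expand A (t i) w u] at h1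
    rw [← h1, ← Fin.sum_univ_eq_sum_range
      (fun k => t i ^ k • ∑ S ∈ Finset.powersetCard k Finset.univ, A (S.piecewise u w))]
  obtain ⟨B, hB⟩ := vandermonde_solve t htinj
  have ha : ∀ k : Fin (n + 1),
      (∑ S ∈ Finset.powersetCard (k : ℕ) Finset.univ, A (S.piecewise u w)) = 0 := by
    intro k
    rw [hB F (fun l => ∑ S ∈ Finset.powersetCard (l : ℕ) Finset.univ, A (S.piecewise u w)) k]
    refine Finset.sum_eq_zero fun i _ => ?_
    rw [hAz i, smul_zero]
  have h0 := ha 0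
  rw [show ((0 : Fin (n + 1)) : ℕ) = 0 from rfl, Finset.powersetCard_zero,
    Finset.sum_singleton, Finset.piecewise_empty] at h0
  exact h0

lemma conjExp_cases (p : ℝ) (hp : 1 ≤ p) :
    conjExp p = ∞ ∨ (conjExp p ≠ ∞ ∧ 0 < (conjExp p).toReal) := by
  by_cases h : p = 1
  · left; simp [conjExp, h]
  · right
    have hp1 : 1 < p := lt_of_le_of_ne hp (Ne.symm h)
    have hpos : 0 < p / (p - 1) := div_pos (by linarith) (by linarith)
    refine ⟨by simp [conjExp, h], ?_⟩
    simp [conjExp, h, ENNReal.toReal_ofReal hpos.le, hpos]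

lemma memℓp_shift {q : ℝ≥0∞} (hq : q = ∞ ∨ (q ≠ ∞ ∧ 0 < q.toReal)) {lam : ℕ → ℝ} (m : ℕ)
    (h : Memℓp lam q) : Memℓp (fun j => lam (m + j)) q := by
  rcases hq with hq | ⟨hq, hq'⟩
  · subst hq
    rw [memℓp_infty_iff] at h ⊢
    obtain ⟨C, hC⟩ := h
    refine ⟨C, ?_⟩
    rintro r ⟨j, rfl⟩
    exact hC ⟨m + j, rfl⟩
  · rw [memℓp_gen_iff hq'] at h ⊢
    refine ((summable_nat_add_iff m).2 h).congr fun j => ?_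
    rw [add_comm]

lemma lp_norm_shift_le {q : ℝ≥0∞} (hq : q = ∞ ∨ (q ≠ ∞ ∧ 0 < q.toReal)) (lam : ℕ → ℝ) (m : ℕ)
    (h : Memℓp lam q) (h' : Memℓp (fun j => lam (m + j)) q) :
    ‖(⟨fun j => lam (m + j), h'⟩ : lp (fun _ : ℕ => ℝ) q)‖
      ≤ ‖(⟨lam, h⟩ : lp (fun _ : ℕ => ℝ) q)‖ := by
  rcases hq with hq | ⟨hq, hq'⟩
  · subst hq
    rw [lp.norm_eq_ciSup, lp.norm_eq_ciSup]
    have hbdd : BddAbove (Set.range fun j => ‖lam j‖) := memℓp_infty_iff.1 h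
    exact ciSup_le fun j => le_ciSup hbdd (m + j)
  · rw [lp.norm_eq_tsum_rpow hq', lp.norm_eq_tsum_rpow hq']
    refine Real.rpow_le_rpow (tsum_nonneg fun j => ?_) ?_ (by positivity)
    · positivity
    · have hsum : Summable fun j => ‖lam j‖ ^ q.toReal := (memℓp_gen_iff hq').1 h
      exact tsum_comp_le_tsum_of_inj hsum (fun j => by positivity) (add_right_injective m)

lemma nucSup_shift (p : ℝ) (x' : ℕ → ∀ i, StrongDual ℝ (E i)) (y : ℕ → F) (m k : ℕ) :
    nucSup p (fun j => x' (m + j)) (fun j => y (m + j)) k = nucSup p x' y (m + k) := by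
  unfold nucSup
  simp [add_assoc]

lemma nucSup_zero_y (p : ℝ) (hp : 0 < p) (x' : ℕ → ∀ i, StrongDual ℝ (E i)) (m : ℕ) :
    nucSup p x' (fun _ => (0 : F)) m = 0 := by
  refine le_antisymm ?_ zero_le
  refine iSup_le fun x => iSup_le fun _ => iSup_le fun y' => iSup_le fun _ => le_of_eq ?_
  have hb : ∀ j : ℕ,
      ENNReal.ofReal |(∏ i, x' (m + j) i (x i)) * y' 0| ^ p = 0 := by
    intro j
    simp [ENNReal.zero_rpow_of_pos hp]
  rw [tsum_congr hb, tsum_zero, ENNReal.zero_rpow_of_pos (by positivity)]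

lemma isNucRep_zero (p : ℝ) (hp : 1 ≤ p) :
    IsNucRep (E := E) (F := F) p 0 (fun _ => 0) (fun _ => 0) (fun _ => 0) := by
  have hp0 : (0 : ℝ) < p := lt_of_lt_of_le one_pos hp
  refine ⟨zero_memℓp, fun v => by simp, ?_, ?_⟩
  · rw [nucSup_zero_y p hp0]
    exact ENNReal.zero_lt_top
  · have : (fun m => nucSup (E := E) p (fun _ => 0) (fun _ => (0 : F)) m)
        = fun _ => (0 : ℝ≥0∞) := funext fun m => nucSup_zero_y p hp0 _ m
    rw [this]
    exact tendsto_const_nhds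

lemma nucNorm_bddBelow (p : ℝ) (C : ContinuousMultilinearMap ℝ E F) :
    BddBelow { r | ∃ lam x' y, ∃ h : Memℓp lam (conjExp p), IsNucRep p C lam x' y ∧
      r = ‖(⟨lam, h⟩ : lp (fun _ : ℕ => ℝ) (conjExp p))‖ * (nucSup p x' y 0).toReal } := by
  refine ⟨0, ?_⟩
  rintro r ⟨lam, x', y, h, _, rfl⟩
  exact mul_nonneg (lp.norm_nonneg' _) ENNReal.toReal_nonneg

theorem finiteType_dense_in_sigma_nuclear (p : ℝ) (hp : 1 ≤ p)
    (A : ContinuousMultilinearMap ℝ E F) (hA : SigmaNuclear p A)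
    (ε : ℝ) (hε : 0 < ε) :
    ∃ B : ContinuousMultilinearMap ℝ E F, FiniteType B ∧
      SigmaNuclear p (A - B) ∧ nucNorm p (A - B) < ε := by
  classical
  obtain ⟨lam, x', y, hmem, hrep, hfin, htend⟩ := hA
  by_cases hsum : ∀ v : ∀ i, E i, Summable fun j => (lam j * ∏ i, x' j i (v i)) • y j
  · -- the good case: the series converges everywhere
    set L : ℝ := ‖(⟨lam, hmem⟩ : lp (fun _ : ℕ => ℝ) (conjExp p))‖ with hL
    have hL0 : 0 ≤ L := lp.norm_nonneg' _
    set δ : ℝ := ε / (2 * (L + 1)) with hδdef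
    have hδ : 0 < δ := by positivity
    obtain ⟨m, hm⟩ := (ENNReal.tendsto_atTop_zero.mp htend) (ENNReal.ofReal δ)
      (ENNReal.ofReal_pos.2 hδ)
    have hm' : nucSup p x' y m ≤ ENNReal.ofReal δ := hm m le_rfl
    have hq := conjExp_cases p hp
    have hmem' : Memℓp (fun j => lam (m + j)) (conjExp p) := memℓp_shift hq m hmem
    set B : ContinuousMultilinearMap ℝ E F :=
      ∑ j ∈ Finset.range m, lam j • rankOne (x' j) (y j) with hB
    have hBapp : ∀ v : ∀ i, E i,
        B v = ∑ j ∈ Finset.range m, (lam j * ∏ i, x' j i (v i)) • y j := by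
      intro v
      rw [hB, ContinuousMultilinearMap.sum_apply]
      refine Finset.sum_congr rfl fun j _ => ?_
      rw [ContinuousMultilinearMap.smul_apply]
      rw [show rankOne (x' j) (y j) v = (∏ i, x' j i (v i)) • y j from by
        simp [rankOne, ContinuousMultilinearMap.compContinuousLinearMap_apply,
          ContinuousMultilinearMap.mkPiRing_apply]]
      rw [smul_smul]
    have hrep' : ∀ v : ∀ i, E i, (A - B) v
        = ∑' j : ℕ, (lam (m + j) * ∏ i, x' (m + j) i (v i)) • y (m + j) := by
      intro v
      have hs := hsum v
      have key := Summable.sum_add_tsum_nat_add m hs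
      rw [ContinuousMultilinearMap.sub_apply, hrep v, hBapp v]
      rw [← key]
      rw [add_sub_cancel_left]
      exact tsum_congr fun j => by rw [add_comm j m]
    have hfin' : nucSup p (fun j => x' (m + j)) (fun j => y (m + j)) 0 < ⊤ := by
      rw [nucSup_shift, Nat.add_zero]
      exact lt_of_le_of_lt hm' ENNReal.ofReal_lt_top
    have htend' : Tendsto (fun k => nucSup p (fun j => x' (m + j)) (fun j => y (m + j)) k)
        atTop (nhds 0) := by
      have h1 : Tendsto (fun k => nucSup p x' y (k + m)) atTop (nhds 0) :=
        htend.comp (tendsto_add_atTop_nat m)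
      refine h1.congr fun k => ?_
      rw [nucSup_shift, add_comm]
    have hNR : IsNucRep p (A - B) (fun j => lam (m + j)) (fun j => x' (m + j))
        (fun j => y (m + j)) := ⟨hmem', hrep', hfin', htend'⟩
    refine ⟨B, ⟨m, lam, x', y, hBapp⟩, ⟨_, _, _, hNR⟩, ?_⟩
    have hmemb : (‖(⟨fun j => lam (m + j), hmem'⟩ : lp (fun _ : ℕ => ℝ) (conjExp p))‖ *
        (nucSup p (fun j => x' (m + j)) (fun j => y (m + j)) 0).toReal) ∈
        { r | ∃ lam₀ x'₀ y₀, ∃ h : Memℓp lam₀ (conjExp p), IsNucRep p (A - B) lam₀ x'₀ y₀ ∧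
          r = ‖(⟨lam₀, h⟩ : lp (fun _ : ℕ => ℝ) (conjExp p))‖ * (nucSup p x'₀ y₀ 0).toReal } :=
      ⟨_, _, _, hmem', hNR, rfl⟩
    have hle := csInf_le (nucNorm_bddBelow p (A - B)) hmemb
    refine lt_of_le_of_lt hle ?_
    have h1 : ‖(⟨fun j => lam (m + j), hmem'⟩ : lp (fun _ : ℕ => ℝ) (conjExp p))‖ ≤ L :=
      lp_norm_shift_le hq lam m hmem hmem'
    have h2 : (nucSup p (fun j => x' (m + j)) (fun j => y (m + j)) 0).toReal ≤ δ := by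
      rw [nucSup_shift, Nat.add_zero]
      exact ENNReal.toReal_le_of_le_ofReal hδ.le hm'
    have h3 : ‖(⟨fun j => lam (m + j), hmem'⟩ : lp (fun _ : ℕ => ℝ) (conjExp p))‖ *
        (nucSup p (fun j => x' (m + j)) (fun j => y (m + j)) 0).toReal ≤ L * δ :=
      mul_le_mul h1 h2 ENNReal.toReal_nonneg hL0
    refine lt_of_le_of_lt h3 ?_
    have hLδ : L * δ ≤ (L + 1) * δ := by nlinarith
    have : (L + 1) * δ = ε / 2 := by
      rw [hδdef]
      field_simp
    nlinarith
  · -- the degenerate case: the series fails to converge somewhere, so `A = 0`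
    push_neg at hsum
    obtain ⟨v₀, hv₀⟩ := hsum
    have hA0 : A = 0 := rep_eq_zero_of_not_summable A lam x' y hrep v₀ hv₀
    refine ⟨0, ⟨0, fun _ => 0, fun _ => 0, fun _ => 0, fun v => by simp⟩, ?_, ?_⟩
    · rw [hA0, sub_zero]
      exact ⟨_, _, _, isNucRep_zero p hp⟩
    · rw [hA0, sub_zero]
      have hp0 : (0 : ℝ) < p := lt_of_lt_of_le one_pos hp
      have hmemb : (0 : ℝ) ∈
          { r | ∃ lam₀ x'₀ y₀, ∃ h : Memℓp lam₀ (conjExp p),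
            IsNucRep p (0 : ContinuousMultilinearMap ℝ E F) lam₀ x'₀ y₀ ∧
            r = ‖(⟨lam₀, h⟩ : lp (fun _ : ℕ => ℝ) (conjExp p))‖ * (nucSup p x'₀ y₀ 0).toReal } := by
        refine ⟨fun _ => 0, fun _ => 0, fun _ => 0, zero_memℓp, isNucRep_zero p hp, ?_⟩
        rw [nucSup_zero_y p hp0, ENNReal.toReal_zero, mul_zero]
      have hle := csInf_le (nucNorm_bddBelow p 0) hmemb
      exact lt_of_le_of_lt hle hε

end
end

section
/- If A is a σ(p)-nuclear n-linear operator on E_1 × ... × E_n with values in F and T_k : D_k → E_k are finite rank bounded linear operators, then the finite type operator A ∘ (T_1,...,T_n) satisfies ‖A ∘ (T_1,...,T_n)‖_{σ(p)f} ≤ ‖A‖_{σ(p)} ‖T_1‖ ··· ‖T_n‖. -/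
open Filter NormedSpace MeasureTheory
open scoped ENNReal

set_option maxHeartbeats 1000000
set_option synthInstance.maxHeartbeats 400000
noncomputable section

variable {n : ℕ} {E : Fin n → Type*} [∀ i, NormedAddCommGroup (E i)] [∀ i, NormedSpace ℝ (E i)]
variable {F : Type*} [NormedAddCommGroup F] [NormedSpace ℝ F]

/-- Finite rank bounded linear operator. -/
def FiniteRank {X Y : Type*} [NormedAddCommGroup X] [NormedSpace ℝ X]
    [NormedAddCommGroup Y] [NormedSpace ℝ Y] (T : X →L[ℝ] Y) : Prop :=
  FiniteDimensional ℝ (LinearMap.range (T : X →ₗ[ℝ] Y))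

/-- The norm `‖·‖_{σ(p)f}` on finite type operators: infimum over finite representations. -/
def nucNormF (p : ℝ) (A : ContinuousMultilinearMap ℝ E F) : ℝ :=
  sInf { r | ∃ (m : ℕ) (lam : ℕ → ℝ) (x' : ℕ → ∀ i, StrongDual ℝ (E i)) (y : ℕ → F),
    ∃ h : Memℓp lam (conjExp p),
    (∀ j, m ≤ j → lam j = 0) ∧ (∀ j, m ≤ j → y j = 0) ∧
    (∀ v : ∀ i, E i, A v = ∑ j ∈ Finset.range m, (lam j * ∏ i, x' j i (v i)) • y j) ∧
    r = ‖(⟨lam, h⟩ : lp (fun _ : ℕ => ℝ) (conjExp p))‖ * (nucSup p x' y 0).toReal }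


section Holder

variable {p : ℝ}

lemma conjExp_toReal (hp : 1 < p) : (conjExp p).toReal = p / (p - 1) := by
  rw [conjExp, if_neg hp.ne', ENNReal.toReal_ofReal (div_nonneg (by linarith) (by linarith))]

lemma one_le_conj (hp : 1 < p) : 1 ≤ p / (p - 1) := by
  rw [le_div_iff₀ (by linarith)]; linarith

lemma fact_conjExp (hp : 1 ≤ p) : Fact (1 ≤ conjExp p) := by
  constructor
  rcases eq_or_lt_of_le hp with h | h
  · rw [conjExp, if_pos h.symm]; exact le_top
  · rw [conjExp, if_neg h.ne']
    simpa using ENNReal.ofReal_le_ofReal (one_le_conj h)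

lemma holder_aux (hp : 1 ≤ p) {lam : ℕ → ℝ} (h : Memℓp lam (conjExp p))
    (c : ℕ → ℝ) (m : ℕ) {S : ℝ} (hS : 0 ≤ S)
    (hc : (∑' j : ℕ, ENNReal.ofReal |c (m + j)| ^ p) ^ (1 / p) ≤ ENNReal.ofReal S) :
    Summable (fun j => |lam (m + j)| * |c (m + j)|) ∧
      ∑' j, |lam (m + j)| * |c (m + j)| ≤
        ‖(⟨lam, h⟩ : lp (fun _ : ℕ => ℝ) (conjExp p))‖ * S := by
  have hp0 : 0 < p := lt_of_lt_of_le zero_lt_one hp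
  -- the ENNReal sum of |c (m+j)| ^ p is bounded
  set Sc : ℝ≥0∞ := ∑' j : ℕ, ENNReal.ofReal |c (m + j)| ^ p with hSc
  have hScS : Sc ≤ ENNReal.ofReal S ^ p := by
    have := ENNReal.rpow_le_rpow hc hp0.le
    rwa [← ENNReal.rpow_mul, one_div_mul_cancel hp0.ne', ENNReal.rpow_one] at this
  have hSctop : Sc ≠ ⊤ :=
    (lt_of_le_of_lt hScS (ENNReal.rpow_lt_top_of_nonneg hp0.le ENNReal.ofReal_ne_top)).ne
  have hterm : ∀ j : ℕ, (ENNReal.ofReal |c (m + j)| ^ p).toReal = |c (m + j)| ^ p := by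
    intro j
    rw [← ENNReal.toReal_rpow, ENNReal.toReal_ofReal (abs_nonneg _)]
  have hsumc : Summable (fun j => |c (m + j)| ^ p) := by
    refine (ENNReal.summable_toReal hSctop).congr fun j => hterm j
  have htsum_c : ∑' j, |c (m + j)| ^ p ≤ S ^ p := by
    have h1 : ∑' j, |c (m + j)| ^ p = Sc.toReal := by
      rw [hSc, ENNReal.tsum_toReal_eq (fun j => ENNReal.rpow_ne_top_of_nonneg hp0.le
        ENNReal.ofReal_ne_top)]
      exact tsum_congr fun j => (hterm j).symm
    rw [h1]
    calc Sc.toReal ≤ (ENNReal.ofReal S ^ p).toReal :=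
          ENNReal.toReal_mono (ENNReal.rpow_ne_top_of_nonneg hp0.le ENNReal.ofReal_ne_top) hScS
      _ = S ^ p := by rw [← ENNReal.toReal_rpow, ENNReal.toReal_ofReal hS]
  have hcS : (∑' j, |c (m + j)| ^ p) ^ (1 / p) ≤ S := by
    have := Real.rpow_le_rpow (z := 1 / p) (tsum_nonneg fun j => by positivity) htsum_c (by positivity)
    rwa [← Real.rpow_mul hS, mul_one_div_cancel hp0.ne', Real.rpow_one] at this
  rcases eq_or_lt_of_le hp with hp1 | hp1
  · -- p = 1, conjugate exponent is ∞
    subst hp1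
    have hQ : conjExp (1:ℝ) = ⊤ := if_pos rfl
    have hlam_bd : ∀ j, |lam j| ≤ ‖(⟨lam, h⟩ : lp (fun _ : ℕ => ℝ) (conjExp 1))‖ := by
      intro j
      simpa using lp.norm_apply_le_norm (by rw [hQ]; exact ENNReal.top_ne_zero)
        (⟨lam, h⟩ : lp (fun _ : ℕ => ℝ) (conjExp 1)) j
    have hN : (0:ℝ) ≤ ‖(⟨lam, h⟩ : lp (fun _ : ℕ => ℝ) (conjExp 1))‖ := lp.norm_nonneg' _
    have hsumc1 : Summable (fun j => |c (m + j)|) := by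
      simpa using hsumc
    have htsum1 : ∑' j, |c (m + j)| ≤ S := by
      have := htsum_c
      simpa using this
    constructor
    · refine Summable.of_nonneg_of_le (fun j => by positivity)
        (fun j => mul_le_mul_of_nonneg_right (hlam_bd (m + j)) (abs_nonneg _))
        (hsumc1.mul_left _)
    · calc ∑' j, |lam (m + j)| * |c (m + j)|
          ≤ ∑' j, ‖(⟨lam, h⟩ : lp (fun _ : ℕ => ℝ) (conjExp 1))‖ * |c (m + j)| := by
            refine Summable.tsum_le_tsum (fun j => mul_le_mul_of_nonneg_right (hlam_bd (m + j))
              (abs_nonneg _)) ?_ (hsumc1.mul_left _)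
            exact Summable.of_nonneg_of_le (fun j => by positivity)
              (fun j => mul_le_mul_of_nonneg_right (hlam_bd (m + j)) (abs_nonneg _))
              (hsumc1.mul_left _)
      _ = ‖(⟨lam, h⟩ : lp (fun _ : ℕ => ℝ) (conjExp 1))‖ * ∑' j, |c (m + j)| := tsum_mul_left
      _ ≤ _ := mul_le_mul_of_nonneg_left htsum1 hN
  · -- 1 < p
    set q : ℝ := p / (p - 1) with hq
    have hpq : p.HolderConjugate q := (Real.holderConjugate_iff_eq_conjExponent hp1).mpr rfl
    have hq1 : 1 ≤ q := one_le_conj hp1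
    have hq0 : 0 < q := lt_of_lt_of_le zero_lt_one hq1
    have hQtop : (conjExp p).toReal = q := conjExp_toReal hp1
    have hsumlam : Summable (fun j => |lam j| ^ q) := by
      have := h.summable (by rw [hQtop]; exact hq0)
      simpa [Real.norm_eq_abs, hQtop] using this
    have hsumlam' : Summable (fun j => |lam (m + j)| ^ q) := by
      refine ((summable_nat_add_iff m).mpr hsumlam).congr fun j => by rw [add_comm]
    have key := Real.summable_and_inner_le_Lp_mul_Lq_tsum_of_nonneg hpq
      (f := fun j => |c (m + j)|) (g := fun j => |lam (m + j)|)
      (fun j => abs_nonneg _) (fun j => abs_nonneg _) hsumc hsumlam'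
    have hcoe : ∀ j, ‖(⟨lam, h⟩ : lp (fun _ : ℕ => ℝ) (conjExp p)) j‖ = |lam j| :=
      fun j => rfl
    have hlamtail : (∑' j, |lam (m + j)| ^ q) ^ (1 / q)
        ≤ ‖(⟨lam, h⟩ : lp (fun _ : ℕ => ℝ) (conjExp p))‖ := by
      have hfull := lp.norm_eq_tsum_rpow (p := conjExp p) (by rw [hQtop]; exact hq0) ⟨lam, h⟩
      simp only [hQtop, hcoe] at hfull
      rw [hfull]
      refine Real.rpow_le_rpow (z := 1 / q) (tsum_nonneg fun j => by positivity) ?_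
        (by positivity)
      have hsplit := Summable.sum_add_tsum_nat_add m hsumlam
      have he : ∑' j, |lam (m + j)| ^ q = ∑' j, |lam (j + m)| ^ q :=
        tsum_congr fun j => by rw [add_comm]
      have hnn : (0:ℝ) ≤ ∑ i ∈ Finset.range m, |lam i| ^ q := by positivity
      rw [he]; linarith
    have hmul : ∀ j, |lam (m + j)| * |c (m + j)| = |c (m + j)| * |lam (m + j)| :=
      fun j => mul_comm _ _
    constructor
    · exact (key.1.congr fun j => (hmul j).symm)
    · calc ∑' j, |lam (m + j)| * |c (m + j)| = ∑' j, |c (m + j)| * |lam (m + j)| :=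
            tsum_congr hmul
        _ ≤ (∑' j, |c (m + j)| ^ p) ^ (1 / p) * (∑' j, |lam (m + j)| ^ q) ^ (1 / q) := key.2
        _ ≤ S * ‖(⟨lam, h⟩ : lp (fun _ : ℕ => ℝ) (conjExp p))‖ := by
            exact mul_le_mul hcS hlamtail
              (Real.rpow_nonneg (tsum_nonneg fun j => by positivity) _) hS
        _ = _ := mul_comm _ _

end Holder

section lpAux

lemma lp_norm_mono {q : ℝ≥0∞} (hq : 1 ≤ q) {f g : ℕ → ℝ} (hf : Memℓp f q) (hg : Memℓp g q)
    (hle : ∀ j, |f j| ≤ |g j|) :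
    ‖(⟨f, hf⟩ : lp (fun _ : ℕ => ℝ) q)‖ ≤ ‖(⟨g, hg⟩ : lp (fun _ : ℕ => ℝ) q)‖ := by
  have hq0 : q ≠ 0 := by intro h0; rw [h0] at hq; exact (not_le.mpr zero_lt_one) hq
  rcases eq_or_ne q ⊤ with rfl | htop
  · refine lp.norm_le_of_forall_le (lp.norm_nonneg' _) fun i => ?_
    refine le_trans (le_trans (le_of_eq (rfl :
        ‖(⟨f, hf⟩ : lp (fun _ : ℕ => ℝ) ⊤) i‖ = |f i|)) (hle i)) ?_
    simpa using lp.norm_apply_le_norm ENNReal.top_ne_zero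
      (⟨g, hg⟩ : lp (fun _ : ℕ => ℝ) ⊤) i
  · have hqt : 0 < q.toReal := ENNReal.toReal_pos hq0 htop
    refine lp.norm_le_of_tsum_le hqt (lp.norm_nonneg' _) ?_
    rw [lp.norm_rpow_eq_tsum hqt (⟨g, hg⟩ : lp (fun _ : ℕ => ℝ) q)]
    refine Summable.tsum_le_tsum (fun j => ?_) (hf.summable hqt) (hg.summable hqt)
    exact Real.rpow_le_rpow (norm_nonneg _) (by simpa [Real.norm_eq_abs] using hle j) hqt.le

lemma memℓp_of_finite {q : ℝ≥0∞} (hq : 1 ≤ q) (f : ℕ → ℝ) (N : ℕ)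
    (hf : ∀ j, N ≤ j → f j = 0) : Memℓp f q := by
  have hq0 : q ≠ 0 := by intro h0; rw [h0] at hq; exact (not_le.mpr zero_lt_one) hq
  rcases eq_or_ne q ⊤ with rfl | htop
  · refine memℓp_infty ?_
    refine Set.Finite.bddAbove (Set.Finite.subset
      ((Set.finite_Icc 0 N).image fun j => ‖f j‖) ?_)
    rintro x ⟨j, rfl⟩
    rcases le_or_gt N j with hj | hj
    · exact ⟨N, ⟨Nat.zero_le _, le_rfl⟩, by simp [hf j hj, hf N le_rfl]⟩
    · exact ⟨j, ⟨Nat.zero_le _, hj.le⟩, rfl⟩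
  · have hqt : 0 < q.toReal := ENNReal.toReal_pos hq0 htop
    refine memℓp_gen ?_
    refine summable_of_ne_finset_zero (s := Finset.range N) fun j hj => ?_
    rw [hf j (by simpa using hj), norm_zero, Real.zero_rpow hqt.ne']

lemma lp_norm_le_card_mul {q : ℝ≥0∞} (hq : 1 ≤ q) {f : ℕ → ℝ} (hf : Memℓp f q)
    (s : Finset ℕ) (hsupp : ∀ j ∉ s, f j = 0) {C : ℝ} (hC : 0 ≤ C)
    (hCb : ∀ j, |f j| ≤ C) :
    ‖(⟨f, hf⟩ : lp (fun _ : ℕ => ℝ) q)‖ ≤ C * s.card := by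
  have hq0 : q ≠ 0 := by intro h0; rw [h0] at hq; exact (not_le.mpr zero_lt_one) hq
  rcases Finset.eq_empty_or_nonempty s with rfl | hne
  · have hf0 : f = 0 := funext fun j => hsupp j (by simp)
    have : (⟨f, hf⟩ : lp (fun _ : ℕ => ℝ) q) = 0 := by
      apply lp.ext; rw [lp.coeFn_zero]; exact hf0
    rw [this, lp.norm_zero]
    simp
  · have hcard1 : (1 : ℝ) ≤ s.card := by
      have := Finset.card_pos.mpr hne
      exact_mod_cast this
    rcases eq_or_ne q ⊤ with rfl | htop
    · refine lp.norm_le_of_forall_le (by positivity) fun i => ?_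
      refine le_trans (le_of_eq (rfl :
          ‖(⟨f, hf⟩ : lp (fun _ : ℕ => ℝ) ⊤) i‖ = |f i|)) ?_
      exact (hCb i).trans (le_mul_of_one_le_right hC hcard1)
    · have hqt : 0 < q.toReal := ENNReal.toReal_pos hq0 htop
      have hqt1 : 1 ≤ q.toReal := by
        rw [← ENNReal.toReal_one]; exact ENNReal.toReal_mono htop hq
      refine lp.norm_le_of_tsum_le hqt (by positivity) ?_
      have hzero : ∀ j ∉ s, ‖f j‖ ^ q.toReal = 0 := fun j hj => by
        rw [hsupp j hj, norm_zero, Real.zero_rpow hqt.ne']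
      rw [show (∑' j, ‖(⟨f, hf⟩ : lp (fun _ : ℕ => ℝ) q) j‖ ^ q.toReal)
          = ∑ j ∈ s, ‖f j‖ ^ q.toReal from tsum_eq_sum hzero]
      calc ∑ j ∈ s, ‖f j‖ ^ q.toReal ≤ ∑ _j ∈ s, C ^ q.toReal := by
            refine Finset.sum_le_sum fun j _ => ?_
            exact Real.rpow_le_rpow (norm_nonneg _)
              (by simpa [Real.norm_eq_abs] using hCb j) hqt.le
        _ = (s.card : ℝ) * C ^ q.toReal := by rw [Finset.sum_const, nsmul_eq_mul]
        _ ≤ (s.card : ℝ) ^ q.toReal * C ^ q.toReal := by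
            refine mul_le_mul_of_nonneg_right ?_ (by positivity)
            calc (s.card : ℝ) = (s.card : ℝ) ^ (1:ℝ) := (Real.rpow_one _).symm
              _ ≤ _ := Real.rpow_le_rpow_of_exponent_le hcard1 hqt1
        _ = (C * s.card) ^ q.toReal := by
            rw [mul_comm ((s.card : ℝ) ^ q.toReal), ← Real.mul_rpow hC (Nat.cast_nonneg _)]

lemma lam'_norm {p : ℝ} (hp : 1 ≤ p) (hfact : Fact (1 ≤ conjExp p))
    {lam : ℕ → ℝ} (h : Memℓp lam (conjExp p))
    (m d : ℕ) {η : ℝ} (hη : 0 < η) :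
    ∃ hmem : Memℓp (fun j => if j < m then lam j else if j < m + d then η else 0) (conjExp p),
      ‖(⟨_, hmem⟩ : lp (fun _ : ℕ => ℝ) (conjExp p))‖
        ≤ ‖(⟨lam, h⟩ : lp (fun _ : ℕ => ℝ) (conjExp p))‖ + η * d := by
  haveI := hfact
  have hq : 1 ≤ conjExp p := hfact.1
  set f₁ : ℕ → ℝ := fun j => if j < m then lam j else 0 with hf₁
  set f₂ : ℕ → ℝ := fun j => if m ≤ j ∧ j < m + d then η else 0 with hf₂
  have h₁ : Memℓp f₁ (conjExp p) := memℓp_of_finite hq _ m fun j hj => by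
    simp [hf₁, not_lt.mpr hj]
  have h₂ : Memℓp f₂ (conjExp p) := memℓp_of_finite hq _ (m + d) fun j hj => by
    simp only [hf₂]
    rw [if_neg]; omega
  have hmem : Memℓp (fun j => if j < m then lam j else if j < m + d then η else 0)
      (conjExp p) := memℓp_of_finite hq _ (m + d) fun j hj => by
    have h1 : ¬ (j < m) := by omega
    have h2 : ¬ (j < m + d) := by omega
    simp [h1, h2]
  refine ⟨hmem, ?_⟩
  have hsplit : (⟨_, hmem⟩ : lp (fun _ : ℕ => ℝ) (conjExp p))
      = ⟨f₁, h₁⟩ + ⟨f₂, h₂⟩ := by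
    apply lp.ext
    rw [lp.coeFn_add]
    funext j
    show (if j < m then lam j else if j < m + d then η else 0) = f₁ j + f₂ j
    by_cases hjm : j < m
    · have hc : ¬ (m ≤ j ∧ j < m + d) := by omega
      simp [hf₁, hf₂, hjm, hc]
    · by_cases hjd : j < m + d
      · have hc : m ≤ j ∧ j < m + d := by omega
        simp [hf₁, hf₂, hjm, hjd, hc]
      · have hc : ¬ (m ≤ j ∧ j < m + d) := by omega
        simp [hf₁, hf₂, hjm, hjd, hc]
  rw [hsplit]
  refine (norm_add_le _ _).trans (add_le_add ?_ ?_)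
  · exact lp_norm_mono hq h₁ h fun j => by
      by_cases hjm : j < m <;> simp [hf₁, hjm, abs_nonneg]
  · have := lp_norm_le_card_mul hq h₂ (Finset.Ico m (m + d))
      (fun j hj => by
        rw [Finset.mem_Ico] at hj
        simp only [hf₂]; rw [if_neg hj])
      hη.le
      (fun j => by
        by_cases hc : m ≤ j ∧ j < m + d
        · simp [hf₂, hc, abs_of_pos hη]
        · simp [hf₂, hc, hη.le])
    simpa [Nat.card_Ico] using this

end lpAux

lemma finite_rank_decomp {X Y : Type*} [NormedAddCommGroup X] [NormedSpace ℝ X]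
    [NormedAddCommGroup Y] [NormedSpace ℝ Y] (T : X →L[ℝ] Y) (hT : FiniteRank T) :
    ∃ (d : ℕ) (e : Fin d → Y) (φ : Fin d → (X →L[ℝ] ℝ)),
      (∀ k, e k ∈ LinearMap.range (T : X →ₗ[ℝ] Y)) ∧
      (∀ u, T u = ∑ k, φ k u • e k) ∧
      (T ≠ 0 → 1 ≤ d) := by
  haveI : FiniteDimensional ℝ (LinearMap.range (T : X →ₗ[ℝ] Y)) := hT
  set V := LinearMap.range (T : X →ₗ[ℝ] Y) with hV
  set d := Module.finrank ℝ V with hd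
  set b : Module.Basis (Fin d) ℝ V := Module.finBasis ℝ V with hb
  have hmem : ∀ u, T u ∈ V := fun u => ⟨u, rfl⟩
  set Tres : X →L[ℝ] V := T.codRestrict V hmem with hTres
  refine ⟨d, fun k => (b k : Y),
    fun k => ((b.coord k).toContinuousLinearMap).comp Tres, fun k => (b k).2, fun u => ?_, ?_⟩
  · have hrep := b.sum_repr (Tres u)
    calc T u = ((Tres u : V) : Y) := rfl
      _ = ((∑ i : Fin d, (b.repr (Tres u)) i • b i : V) : Y) := by rw [hrep]
      _ = ∑ k : Fin d, ((b.coord k).toContinuousLinearMap.comp Tres) u • ((b k : Y)) := by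
          rw [Submodule.coe_sum]
          refine Finset.sum_congr rfl fun k _ => ?_
          simp [Module.Basis.coord_apply]
  · intro hne
    by_contra hlt
    have hdz : d = 0 := by omega
    have hz : V = ⊥ := Submodule.finrank_eq_zero.mp (by rw [← hd, hdz])
    refine hne (ContinuousLinearMap.ext fun u => ?_)
    have := hmem u
    rw [hz, Submodule.mem_bot] at this
    simpa using this



lemma summable_propagate (lam : ℕ → ℝ) (x' : ℕ → ∀ i, StrongDual ℝ (E i)) (y : ℕ → F)
    (d : Fin n → ℕ) (e : ∀ i, Fin (d i) → E i)
    (c₀ : ∀ i, Fin (d i) → ℝ) {r : ℝ} (hr : 0 < r)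
    (h : ∀ c : ∀ i, Fin (d i) → ℝ, dist c c₀ < r →
      Summable (fun j => (lam j * ∏ i, x' j i (∑ k, c i k • e i k)) • y j)) :
    ∀ c : ∀ i, Fin (d i) → ℝ,
      Summable (fun j => (lam j * ∏ i, x' j i (∑ k, c i k • e i k)) • y j) := by
  classical
  set g : ℕ → ∀ i, (Fin (d i) → ℝ) → ℝ :=
    fun j i w => x' j i (∑ k, w k • e i k) with hg
  set trm : (∀ i, Fin (d i) → ℝ) → ℕ → F :=
    fun c j => (lam j * ∏ i, g j i (c i)) • y j with htrm
  have hglin_add : ∀ j i (w w' : Fin (d i) → ℝ), g j i (w + w') = g j i w + g j i w' := by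
    intro j i w w'
    simp only [hg]
    rw [← map_add]
    congr 1
    rw [← Finset.sum_add_distrib]
    refine Finset.sum_congr rfl fun k _ => ?_
    simp [add_smul]
  have hglin_smul : ∀ j i (t : ℝ) (w : Fin (d i) → ℝ), g j i (t • w) = t * g j i w := by
    intro j i t w
    simp only [hg]
    have hsum : (∑ k, (t • w) k • e i k) = t • ∑ k, w k • e i k := by
      rw [Finset.smul_sum]
      refine Finset.sum_congr rfl fun k _ => ?_
      simp [mul_smul]
    rw [hsum, ContinuousLinearMap.map_smul, smul_eq_mul]
  have hQ : ∀ N : ℕ, ∀ c : ∀ i, Fin (d i) → ℝ,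
      (∀ i : Fin n, N ≤ (i : ℕ) → dist (c i) (c₀ i) < r) → Summable (trm c) := by
    intro N
    induction N with
    | zero =>
      intro c hc
      exact h c ((dist_pi_lt_iff hr).mpr fun i => hc i (Nat.zero_le _))
    | succ N IH =>
      intro c hc
      by_cases hN : N < n
      · set i₀ : Fin n := ⟨N, hN⟩ with hi₀
        set a : Fin (d i₀) → ℝ := c i₀ with ha
        set ε : ℝ := r / (2 * (‖a‖ + 1)) with hε
        have hεpos : 0 < ε := by
          apply div_pos hr
          positivity
        have hεa : ‖ε • a‖ < r := by
          rw [norm_smul, Real.norm_eq_abs, abs_of_pos hεpos, hε]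
          rw [div_mul_eq_mul_div, div_lt_iff₀ (by positivity)]
          nlinarith [norm_nonneg a]
        have hupdate : ∀ (w : Fin (d i₀) → ℝ), dist w (c₀ i₀) < r →
            (∀ i : Fin n, N ≤ (i : ℕ) → dist ((Function.update c i₀ w) i) (c₀ i) < r) := by
          intro w hw i hi
          rcases eq_or_ne i i₀ with rfl | hne
          · rwa [Function.update_self]
          · rw [Function.update_of_ne hne]
            refine hc i ?_
            have : (i : ℕ) ≠ N := fun hNi => hne (Fin.ext hNi)
            omega
        have hQ1 : Summable (trm (Function.update c i₀ (c₀ i₀))) :=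
          IH _ (hupdate _ (by rw [dist_self]; exact hr))
        have hQ2 : Summable (trm (Function.update c i₀ (c₀ i₀ + ε • a))) :=
          IH _ (hupdate _ (by rw [dist_eq_norm, add_sub_cancel_left]; exact hεa))
        have hkey : ∀ j, trm (Function.update c i₀ (c₀ i₀ + ε • a)) j
            - trm (Function.update c i₀ (c₀ i₀)) j = ε • trm c j := by
          intro j
          have hprod : ∀ w : Fin (d i₀) → ℝ,
              (∏ i, g j i ((Function.update c i₀ w) i))
                = g j i₀ w * ∏ i ∈ Finset.univ.erase i₀, g j i (c i) := by
            intro w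
            rw [← Finset.mul_prod_erase Finset.univ _ (Finset.mem_univ i₀),
              Function.update_self]
            congr 1
            refine Finset.prod_congr rfl fun i hi => ?_
            rw [Function.update_of_ne (Finset.ne_of_mem_erase hi)]
          have hprodc : (∏ i, g j i (c i))
              = g j i₀ a * ∏ i ∈ Finset.univ.erase i₀, g j i (c i) := by
            rw [← Finset.mul_prod_erase Finset.univ _ (Finset.mem_univ i₀)]
          rw [htrm]
          simp only [hprod, hprodc]
          rw [hglin_add j i₀ (c₀ i₀) (ε • a), hglin_smul j i₀ ε a]
          rw [← sub_smul, smul_smul]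
          congr 1
          ring
        have hsub : Summable (fun j => ε • trm c j) := by
          refine Summable.congr (hQ2.sub hQ1) hkey
        refine (hsub.const_smul ε⁻¹).congr fun j => ?_
        rw [inv_smul_smul₀ hεpos.ne']
      · refine IH c fun i hi => ?_
        have : (i : ℕ) < n := i.2
        omega
  intro c
  exact hQ n c fun i hi => absurd i.2 (by omega)

section Inf

lemma nucNorm_nonneg (p : ℝ) (A : ContinuousMultilinearMap ℝ E F) : 0 ≤ nucNorm p A := by
  refine Real.sInf_nonneg fun r hr => ?_
  obtain ⟨lam, x', y, h, _, rfl⟩ := hr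
  exact mul_nonneg (lp.norm_nonneg' _) ENNReal.toReal_nonneg

lemma le_nucSup (p : ℝ) (x' : ℕ → ∀ i, StrongDual ℝ (E i)) (y : ℕ → F) (m : ℕ)
    (x : ∀ i, E i) (hx : ∀ i, ‖x i‖ ≤ 1) (y' : StrongDual ℝ F) (hy' : ‖y'‖ ≤ 1) :
    (∑' j : ℕ, ENNReal.ofReal |(∏ i, x' (m + j) i (x i)) * y' (y (m + j))| ^ p) ^ (1 / p)
      ≤ nucSup p x' y m :=
  le_iSup_of_le x (le_iSup_of_le hx (le_iSup_of_le y' (le_iSup_of_le hy' le_rfl)))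

lemma nucSup_le {p : ℝ} (x' : ℕ → ∀ i, StrongDual ℝ (E i)) (y : ℕ → F) (m : ℕ) {S : ℝ≥0∞}
    (h : ∀ (x : ∀ i, E i), (∀ i, ‖x i‖ ≤ 1) → ∀ (y' : StrongDual ℝ F), ‖y'‖ ≤ 1 →
      (∑' j : ℕ, ENNReal.ofReal |(∏ i, x' (m + j) i (x i)) * y' (y (m + j))| ^ p) ^ (1 / p)
        ≤ S) :
    nucSup p x' y m ≤ S :=
  iSup_le fun x => iSup_le fun hx => iSup_le fun y' => iSup_le fun hy' => h x hx y' hy'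

lemma nucNormF_le_of_rep (p : ℝ) (A : ContinuousMultilinearMap ℝ E F) (m : ℕ)
    (lam : ℕ → ℝ) (x' : ℕ → ∀ i, StrongDual ℝ (E i)) (y : ℕ → F) (h : Memℓp lam (conjExp p))
    (h1 : ∀ j, m ≤ j → lam j = 0) (h2 : ∀ j, m ≤ j → y j = 0)
    (h3 : ∀ v : ∀ i, E i, A v = ∑ j ∈ Finset.range m, (lam j * ∏ i, x' j i (v i)) • y j) :
    nucNormF p A ≤ ‖(⟨lam, h⟩ : lp (fun _ : ℕ => ℝ) (conjExp p))‖
      * (nucSup p x' y 0).toReal := by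
  refine csInf_le ⟨0, fun r hr => ?_⟩ ⟨m, lam, x', y, h, h1, h2, h3, rfl⟩
  obtain ⟨m', lam', x'', y'', h', _, _, _, rfl⟩ := hr
  exact mul_nonneg (lp.norm_nonneg' _) ENNReal.toReal_nonneg

lemma exists_rep_lt (p : ℝ) (A : ContinuousMultilinearMap ℝ E F) (hA : SigmaNuclear p A)
    {δ : ℝ} (hδ : 0 < δ) :
    ∃ (lam : ℕ → ℝ) (x' : ℕ → ∀ i, StrongDual ℝ (E i)) (y : ℕ → F) (h : Memℓp lam (conjExp p)),
      IsNucRep p A lam x' y ∧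
      ‖(⟨lam, h⟩ : lp (fun _ : ℕ => ℝ) (conjExp p))‖ * (nucSup p x' y 0).toReal
        < nucNorm p A + δ := by
  obtain ⟨lam₀, x'₀, y₀, hrep₀⟩ := hA
  have hne : Set.Nonempty { r | ∃ lam x' y, ∃ h : Memℓp lam (conjExp p),
      IsNucRep p A lam x' y ∧
      r = ‖(⟨lam, h⟩ : lp (fun _ : ℕ => ℝ) (conjExp p))‖ * (nucSup p x' y 0).toReal } :=
    ⟨_, lam₀, x'₀, y₀, hrep₀.1, hrep₀, rfl⟩
  obtain ⟨a, ha, halt⟩ := Real.lt_sInf_add_pos hne hδ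
  obtain ⟨lam, x', y, h, hrep, rfl⟩ := ha
  exact ⟨lam, x', y, h, hrep, halt⟩

lemma nucNormF_zero_le (p : ℝ) (hp : 0 < p) (A : ContinuousMultilinearMap ℝ E F)
    (hA : A = 0) : nucNormF p A ≤ 0 := by
  have h : Memℓp (fun _ : ℕ => (0:ℝ)) (conjExp p) := zero_mem_ℓp'
  have := nucNormF_le_of_rep p A 0 (fun _ => 0) (fun _ _ => 0) (fun _ => 0) h
    (fun j _ => rfl) (fun j _ => rfl)
    (fun v => by simp [hA])
  simpa [nucSup_zero_y p hp] using this

end Inf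

lemma arith_final {Nn P S₀ Λ dR Φ Rp ε η γ : ℝ}
    (hP : 0 < P) (hS₀ : 0 ≤ S₀) (hΛ : 0 ≤ Λ) (hdR : 1 ≤ dR) (hΦ : 0 < Φ) (hRp : 0 < Rp)
    (hε : 0 < ε) (hγ0 : 0 < γ)
    (hη : η = ε / (8 * (dR * (P * S₀ + 1))))
    (hγ1 : γ ≤ η * ε / (8*(Λ*Λ*dR*Φ*Rp+1)))
    (hγ2 : γ ≤ ε / (8*(dR*dR*Φ*Λ*Rp+1)))
    (hval : Λ * S₀ < Nn + ε/(2*(P+1))) :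
    (Λ + η * dR) * (P * S₀ + dR * (Φ * (η⁻¹ * (Λ * (Rp * γ))))) ≤ Nn * P + ε := by
  have hdR0 : (0:ℝ) < dR := lt_of_lt_of_le zero_lt_one hdR
  have hPS : (0:ℝ) ≤ P * S₀ := mul_nonneg hP.le hS₀
  have hηpos : 0 < η := by rw [hη]; positivity
  set W₁ := Λ*Λ*dR*Φ*Rp with hW₁
  have hW₁nn : 0 ≤ W₁ := by positivity
  set W₂ := dR*dR*Φ*Λ*Rp with hW₂
  have hW₂nn : 0 ≤ W₂ := by positivity
  have hδP : ε/(2*(P+1))*P ≤ ε/2 := by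
    rw [div_mul_eq_mul_div, div_le_div_iff₀ (by positivity) (by norm_num)]
    nlinarith [hε.le, hP.le]
  have hT1 : Λ*(P*S₀) ≤ Nn * P + ε/2 := by
    have h1 : Λ*(P*S₀) = (Λ*S₀)*P := by ring
    have h2 : (Λ*S₀)*P ≤ (Nn + ε/(2*(P+1)))*P :=
      mul_le_mul_of_nonneg_right hval.le hP.le
    have h3 : (Nn + ε/(2*(P+1)))*P = Nn * P + ε/(2*(P+1))*P := by ring
    linarith
  have hT2 : Λ*(dR*(Φ*(η⁻¹*(Λ*(Rp*γ))))) ≤ ε/8 := by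
    have h2 : Λ*(dR*(Φ*(η⁻¹*(Λ*(Rp*γ))))) = W₁*γ/η := by
      rw [hW₁]; field_simp
    rw [h2, div_le_iff₀ hηpos]
    calc W₁*γ ≤ W₁*(η * ε / (8*(W₁+1))) := mul_le_mul_of_nonneg_left hγ1 hW₁nn
      _ ≤ ε/8*η := by
          rw [mul_div_assoc', div_le_iff₀ (by positivity : (0:ℝ) < 8*(W₁+1))]
          nlinarith [mul_nonneg (mul_nonneg hηpos.le hε.le) hW₁nn,
            mul_nonneg hηpos.le hε.le]
  have hT3 : η*(dR*(P*S₀)) ≤ ε/8 := by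
    rw [hη, div_mul_eq_mul_div, div_le_div_iff₀ (by positivity) (by norm_num)]
    nlinarith [mul_nonneg hε.le hdR0.le, hε.le,
      mul_nonneg (mul_nonneg hε.le hdR0.le) hPS]
  have hT4 : η*(dR*(dR*(Φ*(η⁻¹*(Λ*(Rp*γ)))))) ≤ ε/8 := by
    have h4a : η*(dR*(dR*(Φ*(η⁻¹*(Λ*(Rp*γ)))))) = W₂*γ := by
      rw [hW₂]; field_simp
    rw [h4a]
    calc W₂*γ ≤ W₂*(ε / (8*(W₂+1))) := mul_le_mul_of_nonneg_left hγ2 hW₂nn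
      _ ≤ ε/8 := by
          rw [mul_div_assoc', div_le_div_iff₀ (by positivity : (0:ℝ) < 8*(W₂+1))
            (by norm_num)]
          nlinarith [mul_nonneg hε.le hW₂nn, hε.le]
  nlinarith [hT1, hT2, hT3, hT4, hε.le]

theorem nucNormF_comp_finiteRank_le {D : Fin n → Type*}
    [∀ i, NormedAddCommGroup (D i)] [∀ i, NormedSpace ℝ (D i)]
    (p : ℝ) (hp : 1 ≤ p)
    (A : ContinuousMultilinearMap ℝ E F) (hA : SigmaNuclear p A)
    (T : ∀ i, D i →L[ℝ] E i) (hT : ∀ i, FiniteRank (T i)) :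
    nucNormF p (A.compContinuousLinearMap T) ≤ nucNorm p A * ∏ i, ‖T i‖ := by
  classical
  have hp0 : 0 < p := lt_of_lt_of_le zero_lt_one hp
  haveI hfact : Fact (1 ≤ conjExp p) := fact_conjExp hp
  have hPnn : (0:ℝ) ≤ ∏ i, ‖T i‖ := Finset.prod_nonneg fun i _ => norm_nonneg _
  have hNn := nucNorm_nonneg p A
  by_cases hBz : A.compContinuousLinearMap T = 0
  · calc nucNormF p (A.compContinuousLinearMap T) ≤ 0 := nucNormF_zero_le p hp0 _ hBz
      _ ≤ _ := mul_nonneg hNn hPnn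
  have hTne : ∀ i, T i ≠ 0 := by
    intro i hTi
    refine hBz (ContinuousMultilinearMap.ext fun u => ?_)
    have h0 : T i (u i) = 0 := by rw [hTi]; rfl
    show A (fun i' => T i' (u i')) = (0 : ContinuousMultilinearMap ℝ D F) u
    rw [A.map_coord_zero i h0]
    rfl
  have hTpos : ∀ i, 0 < ‖T i‖ := fun i =>
    lt_of_le_of_ne (norm_nonneg _) (fun h => hTne i (by
      simpa using (ContinuousLinearMap.opNorm_zero_iff (T i)).mp h.symm))
  have hPpos : (0:ℝ) < ∏ i, ‖T i‖ := Finset.prod_pos fun i _ => hTpos i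
  set P : ℝ := ∏ i, ‖T i‖ with hP
  choose d e φ he hTdec hd1 using fun i => finite_rank_decomp (T i) (hT i)
  haveI hKne : Nonempty (∀ i, Fin (d i)) := ⟨fun i => ⟨0, hd1 i (hTne i)⟩⟩
  set dN := Fintype.card (∀ i, Fin (d i)) with hdN
  have hdN1 : 1 ≤ dN := Fintype.card_pos
  set dR : ℝ := (dN : ℝ) with hdR
  have hdR1 : (1:ℝ) ≤ dR := by rw [hdR]; exact_mod_cast hdN1
  set eqv : Fin dN ≃ (∀ i, Fin (d i)) := (Fintype.equivFin (∀ i, Fin (d i))).symm with heqv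
  set R : Fin n → ℝ := fun i => (∑ k, ‖e i k‖) + 1 with hRdef
  have hRpos : ∀ i, 0 < R i := fun i => by
    have : (0:ℝ) ≤ ∑ k, ‖e i k‖ := Finset.sum_nonneg fun k _ => norm_nonneg _
    simp only [hRdef]; linarith
  have heR : ∀ i k, ‖e i k‖ ≤ R i := fun i k => by
    have h1 : ‖e i k‖ ≤ ∑ k', ‖e i k'‖ :=
      Finset.single_le_sum (fun k' _ => norm_nonneg (e i k')) (Finset.mem_univ k)
    simp only [hRdef]; linarith
  set Rp : ℝ := ∏ i, R i with hRp
  have hRppos : 0 < Rp := Finset.prod_pos fun i _ => hRpos i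
  set Φ : ℝ := ∏ i, ((∑ k, ‖φ i k‖) + 1) with hΦ
  have hΦpos : 0 < Φ := Finset.prod_pos fun i _ => by
    have : (0:ℝ) ≤ ∑ k, ‖φ i k‖ := Finset.sum_nonneg fun k _ => norm_nonneg _
    linarith
  have hφΦ : ∀ κ : ∀ i, Fin (d i), (∏ i, ‖φ i (κ i)‖) ≤ Φ := by
    intro κ
    refine Finset.prod_le_prod (fun i _ => norm_nonneg _) fun i _ => ?_
    have h1 : ‖φ i (κ i)‖ ≤ ∑ k', ‖φ i k'‖ :=
      Finset.single_le_sum (fun k' _ => norm_nonneg (φ i k')) (Finset.mem_univ (κ i))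
    linarith
  refine le_of_forall_pos_le_add fun ε hε => ?_
  have hδpos : 0 < ε / (2*(P+1)) := by positivity
  obtain ⟨lam, x', y, hmemlam, hrep, hval⟩ := exists_rep_lt p A hA hδpos
  obtain ⟨-, hAeq, hfin, htend⟩ := hrep
  set Λ := ‖(⟨lam, hmemlam⟩ : lp (fun _ : ℕ => ℝ) (conjExp p))‖ with hΛ
  have hΛnn : 0 ≤ Λ := lp.norm_nonneg' _
  set S₀ := (nucSup p x' y 0).toReal with hS₀
  have hS₀nn : 0 ≤ S₀ := ENNReal.toReal_nonneg
  set η := ε / (8 * (dR * (P * S₀ + 1))) with hη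
  have hηpos : 0 < η := by
    refine div_pos hε (by nlinarith [mul_nonneg hPnn hS₀nn, hdR1])
  set W₁ := Λ*Λ*dR*Φ*Rp with hW₁
  have hW₁nn : 0 ≤ W₁ := by positivity
  set W₂ := dR*dR*Φ*Λ*Rp with hW₂
  have hW₂nn : 0 ≤ W₂ := by positivity
  set γ := min (η * ε / (8*(W₁+1))) (ε / (8*(W₂+1))) with hγdef
  have hγpos : 0 < γ := lt_min (by positivity) (by positivity)
  obtain ⟨m, hm⟩ : ∃ m, nucSup p x' y m ≤ ENNReal.ofReal γ := by
    have := (ENNReal.tendsto_nhds_zero.mp htend) (ENNReal.ofReal γ)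
      (by simpa using ENNReal.ofReal_pos.mpr hγpos)
    exact this.exists
  have hsummable : ∀ c : ∀ i, Fin (d i) → ℝ,
      Summable (fun j => (lam j * ∏ i, x' j i (∑ k, c i k • e i k)) • y j) := by
    by_cases hdense : Dense {c : ∀ i, Fin (d i) → ℝ |
        ¬ Summable (fun j => (lam j * ∏ i, x' j i (∑ k, c i k • e i k)) • y j)}
    · exfalso
      apply hBz
      have hΨcont : Continuous
          (fun c : ∀ i, Fin (d i) → ℝ => (fun i => ∑ k, c i k • e i k : ∀ i, E i)) := by
        refine continuous_pi fun i => ?_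
        exact continuous_finset_sum _ fun k _ =>
          (((continuous_apply k).comp (continuous_apply i) :
            Continuous fun c : ∀ i, Fin (d i) → ℝ => c i k).smul continuous_const)
      have hcont : Continuous
          (fun c : ∀ i, Fin (d i) → ℝ => A (fun i => ∑ k, c i k • e i k)) :=
        A.cont.comp hΨcont
      have hzero : ∀ c : ∀ i, Fin (d i) → ℝ, A (fun i => ∑ k, c i k • e i k) = 0 := by
        have heq := Continuous.ext_on hdense hcont continuous_const
          (fun c hc => (hAeq _).trans (tsum_eq_zero_of_not_summable hc))
        exact fun c => congrFun heq c
      refine ContinuousMultilinearMap.ext fun u => ?_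
      have hTu : (fun i => T i (u i)) = fun i => ∑ k, (φ i k (u i)) • e i k :=
        funext fun i => hTdec i (u i)
      show A (fun i => T i (u i)) = (0 : ContinuousMultilinearMap ℝ D F) u
      rw [hTu, hzero (fun i k => φ i k (u i))]
      rfl
    · rw [Metric.dense_iff] at hdense
      push_neg at hdense
      obtain ⟨c₀, r, hr, hball⟩ := hdense
      refine summable_propagate lam x' y d e c₀ hr fun c hc => ?_
      by_contra hbad
      rw [Set.eq_empty_iff_forall_notMem] at hball
      exact hball c ⟨Metric.mem_ball.mpr hc, hbad⟩
  have hgrid : ∀ κ : ∀ i, Fin (d i),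
      Summable (fun j => (lam j * ∏ i, x' j i (e i (κ i))) • y j) := by
    intro κ
    refine (hsummable (fun i => Pi.single (κ i) 1)).congr fun j => ?_
    congr 2
    refine Finset.prod_congr rfl fun i _ => ?_
    congr 1
    rw [Finset.sum_eq_single (κ i)]
    · simp
    · intro k _ hk
      rw [Pi.single_apply, if_neg hk, zero_smul]
    · intro hk
      exact absurd (Finset.mem_univ _) hk
  set M := Λ * (Rp * γ) with hM
  have hMnn : 0 ≤ M := by positivity
  set w : (∀ i, Fin (d i)) → F := fun κ => A (fun i => e i (κ i))
      - ∑ j ∈ Finset.range m, (lam j * ∏ i, x' j i (e i (κ i))) • y j with hwdef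
  have hwbound : ∀ κ, ‖w κ‖ ≤ M := by
    intro κ
    set f : ℕ → F := fun j => (lam j * ∏ i, x' j i (e i (κ i))) • y j with hfdef
    have hSf : Summable f := hgrid κ
    have hsplit : w κ = ∑' j, f (j + m) := by
      have h1 : A (fun i => e i (κ i)) = ∑' j, f j := hAeq _
      have h2 := Summable.sum_add_tsum_nat_add m hSf
      simp only [hwdef, h1, ← h2]
      exact add_sub_cancel_left _ _
    by_cases hwz : w κ = 0
    · rw [hwz, norm_zero]; exact hMnn
    obtain ⟨y', hy'1, hy'val⟩ := exists_dual_vector ℝ (w κ) (norm_ne_zero_iff.mpr hwz)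
    set cs : ℕ → ℝ := fun j => (∏ i, x' j i (e i (κ i))) * y' (y j) with hcs
    set xx : ∀ i, E i := fun i => (R i)⁻¹ • e i (κ i) with hxx
    have hxx1 : ∀ i, ‖xx i‖ ≤ 1 := by
      intro i
      simp only [hxx]
      rw [norm_smul, Real.norm_eq_abs, abs_of_pos (inv_pos.mpr (hRpos i)),
        inv_mul_eq_div, div_le_one (hRpos i)]
      exact heR i (κ i)
    have hterm : ∀ j, |cs j| = Rp * |(∏ i, x' j i (xx i)) * y' (y j)| := by
      intro j
      have hei : ∀ i, x' j i (e i (κ i)) = R i * x' j i (xx i) := by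
        intro i
        have h5 : e i (κ i) = (R i) • xx i := by
          simp only [hxx]
          rw [smul_inv_smul₀ (hRpos i).ne']
        rw [h5, ContinuousLinearMap.map_smul, smul_eq_mul]
      simp only [hcs, hei]
      rw [Finset.prod_mul_distrib, mul_assoc, abs_mul, abs_of_pos (by
        simpa [hRp] using hRppos)]
    have hc : (∑' j : ℕ, ENNReal.ofReal |cs (m + j)| ^ p) ^ (1/p)
        ≤ ENNReal.ofReal (Rp * γ) := by
      have h6 : ∀ j : ℕ, ENNReal.ofReal |cs (m + j)| ^ p
          = ENNReal.ofReal Rp ^ p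
            * ENNReal.ofReal |(∏ i, x' (m + j) i (xx i)) * y' (y (m + j))| ^ p := by
        intro j
        rw [hterm (m + j), ENNReal.ofReal_mul hRppos.le,
          ENNReal.mul_rpow_of_nonneg _ _ hp0.le]
      calc (∑' j : ℕ, ENNReal.ofReal |cs (m + j)| ^ p) ^ (1/p)
          = (ENNReal.ofReal Rp ^ p * ∑' j : ℕ,
              ENNReal.ofReal |(∏ i, x' (m + j) i (xx i)) * y' (y (m + j))| ^ p) ^ (1/p) := by
            rw [← ENNReal.tsum_mul_left]
            exact congrArg (· ^ (1/p)) (tsum_congr h6)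
        _ = ENNReal.ofReal Rp * (∑' j : ℕ,
              ENNReal.ofReal |(∏ i, x' (m + j) i (xx i)) * y' (y (m + j))| ^ p) ^ (1/p) := by
            rw [ENNReal.mul_rpow_of_nonneg _ _ (by positivity : (0:ℝ) ≤ 1/p),
              ← ENNReal.rpow_mul, mul_one_div_cancel hp0.ne', ENNReal.rpow_one]
        _ ≤ ENNReal.ofReal Rp * ENNReal.ofReal γ := by
            refine mul_le_mul_right ?_ _
            exact le_trans (le_nucSup p x' y m xx hxx1 y' hy'1.le) hm
        _ = ENNReal.ofReal (Rp * γ) := (ENNReal.ofReal_mul hRppos.le).symm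
    obtain ⟨hsum_abs, hholder⟩ := holder_aux hp hmemlam cs m
      (by positivity : (0:ℝ) ≤ Rp * γ) hc
    have htail : Summable fun j => f (j + m) := (summable_nat_add_iff m).mpr hSf
    have h2 : y' (w κ) = ∑' j, y' (f (j + m)) := by
      rw [hsplit]
      exact y'.map_tsum htail
    have h3 : ∀ j, y' (f (j + m)) = lam (m + j) * cs (m + j) := by
      intro j
      simp only [hfdef, hcs]
      rw [add_comm j m, ContinuousLinearMap.map_smul, smul_eq_mul]
      ring
    have h4 : ‖w κ‖ = ∑' j, lam (m + j) * cs (m + j) := by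
      have hval' : y' (w κ) = ‖w κ‖ := by exact_mod_cast hy'val
      rw [← hval', h2]
      exact tsum_congr h3
    have habs : Summable fun j => |lam (m + j) * cs (m + j)| :=
      hsum_abs.congr fun j => (abs_mul _ _).symm
    calc ‖w κ‖ = ∑' j, lam (m + j) * cs (m + j) := h4
      _ ≤ |∑' j, lam (m + j) * cs (m + j)| := le_abs_self _
      _ ≤ ∑' j, |lam (m + j) * cs (m + j)| := by
          have h7 : Summable fun j => ‖lam (m + j) * cs (m + j)‖ :=
            habs.congr fun j => (Real.norm_eq_abs _).symm
          have h8 := norm_tsum_le_tsum_norm (f := fun j => lam (m + j) * cs (m + j)) h7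
          calc |∑' j, lam (m + j) * cs (m + j)|
              = ‖∑' j, lam (m + j) * cs (m + j)‖ := (Real.norm_eq_abs _).symm
            _ ≤ ∑' j, ‖lam (m + j) * cs (m + j)‖ := h8
            _ = ∑' j, |lam (m + j) * cs (m + j)| :=
                tsum_congr fun j => Real.norm_eq_abs _
      _ = ∑' j, |lam (m + j)| * |cs (m + j)| := tsum_congr fun j => abs_mul _ _
      _ ≤ Λ * (Rp * γ) := hholder
      _ = M := hM.symm
  set lam' : ℕ → ℝ := fun j => if j < m then lam j else if j < m + dN then η else 0
    with hlam'
  obtain ⟨hmem', hnorm'⟩ := lam'_norm hp hfact hmemlam m dN hηpos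
  set x'' : ℕ → ∀ i, StrongDual ℝ (D i) := fun j i =>
    if j < m then (x' j i).comp (T i)
    else if hj : j - m < dN then φ i ((eqv ⟨j - m, hj⟩) i) else 0 with hx''
  set y'' : ℕ → F := fun j =>
    if j < m then y j else if hj : j - m < dN then η⁻¹ • w (eqv ⟨j - m, hj⟩) else 0
    with hy''
  have hlam'0 : ∀ j, m + dN ≤ j → lam' j = 0 := fun j hj => by
    have h1 : ¬ (j < m) := by omega
    have h2 : ¬ (j < m + dN) := by omega
    simp [hlam', h1, h2]
  have hy''0 : ∀ j, m + dN ≤ j → y'' j = 0 := fun j hj => by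
    have h1 : ¬ (j < m) := by omega
    have h2 : ¬ (j - m < dN) := by omega
    simp [hy'', h1, h2]
  have hrepid : ∀ v : ∀ i, D i, (A.compContinuousLinearMap T) v
      = ∑ j ∈ Finset.range (m + dN), (lam' j * ∏ i, x'' j i (v i)) • y'' j := by
    intro v
    have hcomp : (A.compContinuousLinearMap T) v = A (fun i => T i (v i)) := rfl
    have hsplitsum : ∑ j ∈ Finset.range (m + dN), (lam' j * ∏ i, x'' j i (v i)) • y'' j
        = (∑ j ∈ Finset.range m, (lam j * ∏ i, x' j i (T i (v i))) • y j)
          + ∑ κ : (∀ i, Fin (d i)), (∏ i, (φ i (κ i)) (v i)) • w κ := by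
      rw [Finset.range_eq_Ico,
        ← Finset.sum_Ico_consecutive _ (Nat.zero_le m) (Nat.le_add_right m dN)]
      congr 1
      · rw [← Finset.range_eq_Ico]
        refine Finset.sum_congr rfl fun j hj => ?_
        rw [Finset.mem_range] at hj
        simp only [hlam', hx'', hy'', if_pos hj]
        rfl
      · rw [Finset.sum_Ico_eq_sum_range, Nat.add_sub_cancel_left,
          ← Fin.sum_univ_eq_sum_range, ← Equiv.sum_comp eqv
            (fun κ => (∏ i, (φ i (κ i)) (v i)) • w κ)]
        refine Finset.sum_congr rfl fun jj _ => ?_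
        have hjm : ¬ (m + (jj : ℕ) < m) := by omega
        have hjd : m + (jj : ℕ) - m < dN := by
          have := jj.2
          omega
        have hjlt : m + (jj : ℕ) < m + dN := by
          have := jj.2
          omega
        simp only [hlam', hx'', hy'', if_neg hjm, dif_pos hjd, if_pos hjlt]
        have hfin : (⟨m + (jj : ℕ) - m, hjd⟩ : Fin dN) = jj := by
          ext
          simp
        rw [hfin, smul_smul]
        congr 1
        rw [mul_comm η, mul_assoc, mul_inv_cancel₀ hηpos.ne', mul_one]
    have hAexp : A (fun i => T i (v i))
        = ∑ κ : ∀ i, Fin (d i), (∏ i, (φ i (κ i)) (v i)) • A (fun i => e i (κ i)) := by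
      have h1 : (fun i => T i (v i)) = fun i => ∑ k, (φ i k) (v i) • e i k :=
        funext fun i => hTdec i (v i)
      rw [h1]
      rw [show A (fun i => ∑ k, (φ i k) (v i) • e i k)
          = A.toMultilinearMap (fun i => ∑ k, (φ i k) (v i) • e i k) from rfl]
      rw [A.toMultilinearMap.map_sum]
      exact Finset.sum_congr rfl fun κ _ => A.toMultilinearMap.map_smul_univ _ _
    have hheadexp : ∑ κ : ∀ i, Fin (d i), (∏ i, (φ i (κ i)) (v i)) •
        (∑ j ∈ Finset.range m, (lam j * ∏ i, x' j i (e i (κ i))) • y j)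
        = ∑ j ∈ Finset.range m, (lam j * ∏ i, x' j i (T i (v i))) • y j := by
      calc ∑ κ : ∀ i, Fin (d i), (∏ i, (φ i (κ i)) (v i)) •
            (∑ j ∈ Finset.range m, (lam j * ∏ i, x' j i (e i (κ i))) • y j)
          = ∑ κ : ∀ i, Fin (d i), ∑ j ∈ Finset.range m,
              ((∏ i, (φ i (κ i)) (v i)) * (lam j * ∏ i, x' j i (e i (κ i)))) • y j := by
            refine Finset.sum_congr rfl fun κ _ => ?_
            rw [Finset.smul_sum]
            exact Finset.sum_congr rfl fun j _ => smul_smul _ _ _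
        _ = ∑ j ∈ Finset.range m, ∑ κ : ∀ i, Fin (d i),
              ((∏ i, (φ i (κ i)) (v i)) * (lam j * ∏ i, x' j i (e i (κ i)))) • y j :=
            Finset.sum_comm
        _ = ∑ j ∈ Finset.range m, (lam j * ∏ i, x' j i (T i (v i))) • y j := by
            refine Finset.sum_congr rfl fun j _ => ?_
            rw [← Finset.sum_smul]
            congr 1
            have h2 : ∀ κ : ∀ i, Fin (d i),
                (∏ i, (φ i (κ i)) (v i)) * (lam j * ∏ i, x' j i (e i (κ i)))
                = lam j * ∏ i, ((φ i (κ i)) (v i) * x' j i (e i (κ i))) := by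
              intro κ
              rw [Finset.prod_mul_distrib]
              ring
            rw [Finset.sum_congr rfl fun κ _ => h2 κ, ← Finset.mul_sum]
            congr 1
            have h3 : ∀ i, x' j i (T i (v i)) = ∑ k, ((φ i k) (v i) * x' j i (e i k)) := by
              intro i
              rw [hTdec i (v i), map_sum]
              exact Finset.sum_congr rfl fun k _ => by
                rw [ContinuousLinearMap.map_smul, smul_eq_mul]
            calc ∑ κ : ∀ i, Fin (d i), ∏ i, ((φ i (κ i)) (v i) * x' j i (e i (κ i)))
                = ∏ i, ∑ k, ((φ i k) (v i) * x' j i (e i k)) :=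
                  (Fintype.prod_sum (fun i k => (φ i k) (v i) * x' j i (e i k))).symm
              _ = ∏ i, x' j i (T i (v i)) := Finset.prod_congr rfl fun i _ => (h3 i).symm
    have hwsum : ∑ κ : ∀ i, Fin (d i), (∏ i, (φ i (κ i)) (v i)) • w κ
        = (∑ κ : ∀ i, Fin (d i), (∏ i, (φ i (κ i)) (v i)) • A (fun i => e i (κ i)))
          - ∑ κ : ∀ i, Fin (d i), (∏ i, (φ i (κ i)) (v i)) •
              (∑ j ∈ Finset.range m, (lam j * ∏ i, x' j i (e i (κ i))) • y j) := by
      simp only [hwdef]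
      rw [← Finset.sum_sub_distrib]
      exact Finset.sum_congr rfl fun κ _ => smul_sub _ _ _
    rw [hcomp, hsplitsum, hwsum, ← hAexp, hheadexp]
    abel
  have hkey := nucNormF_le_of_rep p (A.compContinuousLinearMap T) (m + dN) lam' x'' y''
    hmem' hlam'0 hy''0 hrepid
  set Bd := P * S₀ + dR * (Φ * (η⁻¹ * M)) with hBd
  have hBdnn : 0 ≤ Bd := by positivity
  have hsup'' : nucSup p x'' y'' 0 ≤ ENNReal.ofReal Bd := by
    refine nucSup_le _ _ _ fun x hx y' hy' => ?_
    simp only [zero_add]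
    set xt : ∀ i, E i := fun i => ‖T i‖⁻¹ • T i (x i) with hxt
    have hxt1 : ∀ i, ‖xt i‖ ≤ 1 := by
      intro i
      simp only [hxt]
      rw [norm_smul, Real.norm_eq_abs, abs_of_pos (inv_pos.mpr (hTpos i)),
        inv_mul_eq_div, div_le_one (hTpos i)]
      calc ‖T i (x i)‖ ≤ ‖T i‖ * ‖x i‖ := (T i).le_opNorm (x i)
        _ ≤ ‖T i‖ * 1 := mul_le_mul_of_nonneg_left (hx i) (hTpos i).le
        _ = ‖T i‖ := mul_one _
    have hS1 : (∑' j : ℕ, ENNReal.ofReal |(∏ i, x' j i (xt i)) * y' (y j)| ^ p) ^ (1/p)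
        ≤ ENNReal.ofReal S₀ := by
      have h1 := le_nucSup p x' y 0 xt hxt1 y' hy'
      simp only [zero_add] at h1
      rw [hS₀, ENNReal.ofReal_toReal hfin.ne]
      exact h1
    have hS1' : (∑' j : ℕ, ENNReal.ofReal |(∏ i, x' j i (xt i)) * y' (y j)| ^ p)
        ≤ (ENNReal.ofReal S₀) ^ p := by
      have h2 := ENNReal.rpow_le_rpow hS1 hp0.le
      rwa [← ENNReal.rpow_mul, one_div_mul_cancel hp0.ne', ENNReal.rpow_one] at h2
    have hzero : ∀ j ∉ Finset.range (m + dN),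
        ENNReal.ofReal |(∏ i, x'' j i (x i)) * y' (y'' j)| ^ p = 0 := by
      intro j hj
      rw [Finset.mem_range, not_lt] at hj
      rw [hy''0 j hj]
      simp [ENNReal.zero_rpow_of_pos hp0]
    rw [tsum_eq_sum hzero, Finset.range_eq_Ico,
      ← Finset.sum_Ico_consecutive _ (Nat.zero_le m) (Nat.le_add_right m dN)]
    have hhead : ∑ j ∈ Finset.Ico 0 m,
        ENNReal.ofReal |(∏ i, x'' j i (x i)) * y' (y'' j)| ^ p
        ≤ (ENNReal.ofReal P) ^ p * (ENNReal.ofReal S₀) ^ p := by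
      have hterm : ∀ j ∈ Finset.Ico 0 m,
          ENNReal.ofReal |(∏ i, x'' j i (x i)) * y' (y'' j)| ^ p
          = (ENNReal.ofReal P) ^ p
            * ENNReal.ofReal |(∏ i, x' j i (xt i)) * y' (y j)| ^ p := by
        intro j hj
        rw [Finset.mem_Ico] at hj
        have hjm : j < m := hj.2
        have hTxt : ∀ i, x'' j i (x i) = ‖T i‖ * x' j i (xt i) := by
          intro i
          simp only [hx'', if_pos hjm]
          have h5 : T i (x i) = ‖T i‖ • xt i := by
            simp only [hxt]
            rw [smul_inv_smul₀ (hTpos i).ne']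
          show x' j i (T i (x i)) = _
          rw [h5, ContinuousLinearMap.map_smul, smul_eq_mul]
        rw [hP]
        simp only [hy'', if_pos hjm, hTxt]
        rw [Finset.prod_mul_distrib, mul_assoc, abs_mul,
          abs_of_pos (Finset.prod_pos fun i _ => hTpos i),
          ENNReal.ofReal_mul (Finset.prod_nonneg fun i _ => norm_nonneg _),
          ENNReal.mul_rpow_of_nonneg _ _ hp0.le]
      calc ∑ j ∈ Finset.Ico 0 m, ENNReal.ofReal |(∏ i, x'' j i (x i)) * y' (y'' j)| ^ p
          = ∑ j ∈ Finset.Ico 0 m, (ENNReal.ofReal P) ^ p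
              * ENNReal.ofReal |(∏ i, x' j i (xt i)) * y' (y j)| ^ p :=
            Finset.sum_congr rfl hterm
        _ = (ENNReal.ofReal P) ^ p * ∑ j ∈ Finset.Ico 0 m,
              ENNReal.ofReal |(∏ i, x' j i (xt i)) * y' (y j)| ^ p := by
            rw [← Finset.mul_sum]
        _ ≤ (ENNReal.ofReal P) ^ p
              * ∑' j, ENNReal.ofReal |(∏ i, x' j i (xt i)) * y' (y j)| ^ p :=
            mul_le_mul_right (ENNReal.sum_le_tsum _) _
        _ ≤ (ENNReal.ofReal P) ^ p * (ENNReal.ofReal S₀) ^ p := mul_le_mul_right hS1' _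
    have hcorr : ∑ j ∈ Finset.Ico m (m + dN),
        ENNReal.ofReal |(∏ i, x'' j i (x i)) * y' (y'' j)| ^ p
        ≤ (dN : ℝ≥0∞) * (ENNReal.ofReal (Φ * (η⁻¹ * M))) ^ p := by
      have hterm : ∀ j ∈ Finset.Ico m (m + dN),
          ENNReal.ofReal |(∏ i, x'' j i (x i)) * y' (y'' j)| ^ p
          ≤ (ENNReal.ofReal (Φ * (η⁻¹ * M))) ^ p := by
        intro j hj
        rw [Finset.mem_Ico] at hj
        have hjm : ¬ (j < m) := by omega
        have hjd : j - m < dN := by omega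
        refine ENNReal.rpow_le_rpow (ENNReal.ofReal_le_ofReal ?_) hp0.le
        simp only [hx'', hy'', if_neg hjm, dif_pos hjd]
        rw [abs_mul]
        have hb1 : |∏ i, (φ i ((eqv ⟨j - m, hjd⟩) i)) (x i)| ≤ Φ := by
          rw [Finset.abs_prod]
          refine le_trans (Finset.prod_le_prod (fun i _ => abs_nonneg _)
            (fun i _ => ?_)) (hφΦ (eqv ⟨j - m, hjd⟩))
          calc |(φ i ((eqv ⟨j - m, hjd⟩) i)) (x i)|
              ≤ ‖φ i ((eqv ⟨j - m, hjd⟩) i)‖ * ‖x i‖ :=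
                (φ i ((eqv ⟨j - m, hjd⟩) i)).le_opNorm (x i)
            _ ≤ ‖φ i ((eqv ⟨j - m, hjd⟩) i)‖ * 1 :=
                mul_le_mul_of_nonneg_left (hx i) (norm_nonneg _)
            _ = ‖φ i ((eqv ⟨j - m, hjd⟩) i)‖ := mul_one _
        have hb2 : |y' (η⁻¹ • w (eqv ⟨j - m, hjd⟩))| ≤ η⁻¹ * M := by
          calc |y' (η⁻¹ • w (eqv ⟨j - m, hjd⟩))|
              ≤ ‖y'‖ * ‖η⁻¹ • w (eqv ⟨j - m, hjd⟩)‖ :=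
                y'.le_opNorm _
            _ ≤ 1 * ‖η⁻¹ • w (eqv ⟨j - m, hjd⟩)‖ :=
                mul_le_mul_of_nonneg_right hy' (norm_nonneg _)
            _ = ‖η⁻¹ • w (eqv ⟨j - m, hjd⟩)‖ := one_mul _
            _ ≤ η⁻¹ * M := by
                rw [norm_smul, Real.norm_eq_abs, abs_of_pos (inv_pos.mpr hηpos)]
                exact mul_le_mul_of_nonneg_left (hwbound _) (inv_pos.mpr hηpos).le
        exact mul_le_mul hb1 hb2 (abs_nonneg _) hΦpos.le
      calc ∑ j ∈ Finset.Ico m (m + dN),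
          ENNReal.ofReal |(∏ i, x'' j i (x i)) * y' (y'' j)| ^ p
          ≤ ∑ _j ∈ Finset.Ico m (m + dN), (ENNReal.ofReal (Φ * (η⁻¹ * M))) ^ p :=
            Finset.sum_le_sum hterm
        _ = (dN : ℝ≥0∞) * (ENNReal.ofReal (Φ * (η⁻¹ * M))) ^ p := by
            rw [Finset.sum_const, Nat.card_Ico, Nat.add_sub_cancel_left, nsmul_eq_mul]
    have hsplitp : ∀ a b : ℝ≥0∞, (a + b) ^ (1/p) ≤ a ^ (1/p) + b ^ (1/p) := by
      intro a b
      have h6 := ENNReal.rpow_add_rpow_le_add (a ^ (1/p)) (b ^ (1/p)) hp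
      rwa [← ENNReal.rpow_mul, ← ENNReal.rpow_mul, one_div_mul_cancel hp0.ne',
        ENNReal.rpow_one, ENNReal.rpow_one] at h6
    calc (∑ j ∈ Finset.Ico 0 m, ENNReal.ofReal |(∏ i, x'' j i (x i)) * y' (y'' j)| ^ p
          + ∑ j ∈ Finset.Ico m (m + dN),
              ENNReal.ofReal |(∏ i, x'' j i (x i)) * y' (y'' j)| ^ p) ^ (1/p)
        ≤ (∑ j ∈ Finset.Ico 0 m, ENNReal.ofReal |(∏ i, x'' j i (x i)) * y' (y'' j)| ^ p)
            ^ (1/p)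
          + (∑ j ∈ Finset.Ico m (m + dN),
              ENNReal.ofReal |(∏ i, x'' j i (x i)) * y' (y'' j)| ^ p) ^ (1/p) :=
          hsplitp _ _
      _ ≤ ((ENNReal.ofReal P) ^ p * (ENNReal.ofReal S₀) ^ p) ^ (1/p)
          + ((dN : ℝ≥0∞) * (ENNReal.ofReal (Φ * (η⁻¹ * M))) ^ p) ^ (1/p) :=
          add_le_add (ENNReal.rpow_le_rpow hhead (by positivity))
            (ENNReal.rpow_le_rpow hcorr (by positivity))
      _ ≤ ENNReal.ofReal (P * S₀) + ENNReal.ofReal (dR * (Φ * (η⁻¹ * M))) := by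
          refine add_le_add (le_of_eq ?_) ?_
          · rw [← ENNReal.mul_rpow_of_nonneg _ _ hp0.le, ← ENNReal.rpow_mul,
              mul_one_div_cancel hp0.ne', ENNReal.rpow_one,
              ← ENNReal.ofReal_mul hPnn]
          · rw [ENNReal.mul_rpow_of_nonneg _ _ (by positivity : (0:ℝ) ≤ 1/p),
              ← ENNReal.rpow_mul, mul_one_div_cancel hp0.ne', ENNReal.rpow_one,
              ENNReal.ofReal_mul (by positivity : (0:ℝ) ≤ dR)]
            refine mul_le_mul_left ?_ _
            calc (dN : ℝ≥0∞) ^ (1/p) ≤ (dN : ℝ≥0∞) ^ (1:ℝ) := by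
                  refine ENNReal.rpow_le_rpow_of_exponent_le ?_ ?_
                  · exact_mod_cast hdN1
                  · rw [div_le_one hp0]; exact hp
              _ = (dN : ℝ≥0∞) := ENNReal.rpow_one _
              _ = ENNReal.ofReal dR := by
                  rw [hdR, ENNReal.ofReal_natCast]
      _ = ENNReal.ofReal Bd := by
          rw [← ENNReal.ofReal_add (by positivity) (by positivity), hBd]
  have hsupR : (nucSup p x'' y'' 0).toReal ≤ Bd :=
    ENNReal.toReal_le_of_le_ofReal hBdnn hsup''
  have harith : (Λ + η * dR) * Bd ≤ nucNorm p A * P + ε := by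
    have hγ1 : γ ≤ η * ε / (8*(Λ*Λ*dR*Φ*Rp+1)) := by
      rw [hγdef, hW₁]; exact min_le_left _ _
    have hγ2 : γ ≤ ε / (8*(dR*dR*Φ*Λ*Rp+1)) := by
      rw [hγdef, hW₂]; exact min_le_right _ _
    rw [hBd, hM]
    exact arith_final hPpos hS₀nn hΛnn hdR1 hΦpos hRppos hε hγpos hη hγ1 hγ2 hval
  calc nucNormF p (A.compContinuousLinearMap T)
      ≤ ‖(⟨lam', hmem'⟩ : lp (fun _ : ℕ => ℝ) (conjExp p))‖
          * (nucSup p x'' y'' 0).toReal := hkey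
    _ ≤ (Λ + η * dR) * Bd := by
        refine mul_le_mul (by exact_mod_cast hnorm') hsupR ENNReal.toReal_nonneg (by positivity)
    _ ≤ nucNorm p A * P + ε := harith

end
end

section
/- For 1 ≤ q ≤ p, the space of quasi-τ(p;q)-summing n-linear operators from E_1 × ... × E_n to F', equipped with the norm ‖S‖_{qτ(p;q)} (the infimum of admissible constants C), is a Banach space. -/
open Filter NormedSpace MeasureTheory
open scoped ENNReal

set_option maxHeartbeats 1000000
set_option synthInstance.maxHeartbeats 400000

noncomputable section

variable {n : ℕ} {E : Fin n → Type*} [∀ i, NormedAddCommGroup (E i)] [∀ i, NormedSpace ℝ (E i)]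
variable {F : Type*} [NormedAddCommGroup F] [NormedSpace ℝ F]

/-- The weak sup `sup_{x'ᵢ ∈ B_{Eᵢ'}, y' ∈ B_{F'}} (∑_{j<m} |x'_1(x_{1j}) ⋯ x'_n(x_{nj}) y'(y_j)|^q)^{1/q}`. -/
def qtSup (q : ℝ) (x : ℕ → ∀ i, E i) (y : ℕ → F) (m : ℕ) : ℝ :=
  ⨆ (x' : ∀ i, {f : StrongDual ℝ (E i) // ‖f‖ ≤ 1}) (y' : {f : StrongDual ℝ F // ‖f‖ ≤ 1}),
    (∑ j ∈ Finset.range m, |(∏ i, (x' i).1 (x j i)) * (y'.1 (y j))| ^ q) ^ (1 / q)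

/-- `C` is an admissible constant for the quasi-τ(p;q)-summing inequality for `S`. -/
def QuasiTauBound (p q : ℝ) (S : ContinuousMultilinearMap ℝ E (StrongDual ℝ F)) (C : ℝ) : Prop :=
  ∀ (m : ℕ) (x : ℕ → ∀ i, E i) (y : ℕ → F),
    (∑ j ∈ Finset.range m, |S (x j) (y j)| ^ p) ^ (1 / p) ≤ C * qtSup q x y m

/-- Quasi-τ(p;q)-summing multilinear operators. -/
def QuasiTauSumming (p q : ℝ) (S : ContinuousMultilinearMap ℝ E (StrongDual ℝ F)) : Prop :=
  ∃ C, 0 ≤ C ∧ QuasiTauBound p q S C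

/-- The quasi-τ(p;q)-summing norm: infimum of admissible constants. -/
def quasiTauNorm (p q : ℝ) (S : ContinuousMultilinearMap ℝ E (StrongDual ℝ F)) : ℝ :=
  sInf {C | 0 ≤ C ∧ QuasiTauBound p q S C}

namespace QuasiTauAux

variable {p q : ℝ}

lemma qtSup_nonneg (q : ℝ) (x : ℕ → ∀ i, E i) (y : ℕ → F) (m : ℕ) : 0 ≤ qtSup q x y m := by
  refine Real.iSup_nonneg fun x' => Real.iSup_nonneg fun y' => ?_
  exact Real.rpow_nonneg (Finset.sum_nonneg fun j _ => Real.rpow_nonneg (abs_nonneg _) _) _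

lemma set_isClosed (S : ContinuousMultilinearMap ℝ E (StrongDual ℝ F)) :
    IsClosed {C : ℝ | 0 ≤ C ∧ QuasiTauBound p q S C} := by
  have hset : {C : ℝ | 0 ≤ C ∧ QuasiTauBound p q S C} =
      {C : ℝ | 0 ≤ C} ∩ ⋂ m, ⋂ x, ⋂ y, {C : ℝ |
        (∑ j ∈ Finset.range m, |S (x j) (y j)| ^ p) ^ (1 / p) ≤ C * qtSup q x y m} := by
    ext C
    simp only [Set.mem_setOf_eq, Set.mem_inter_iff, Set.mem_iInter, QuasiTauBound]
  rw [hset]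
  refine (isClosed_le continuous_const continuous_id).inter ?_
  refine isClosed_iInter fun m => isClosed_iInter fun x => isClosed_iInter fun y => ?_
  exact isClosed_le continuous_const (continuous_id.mul continuous_const)

lemma norm_nonneg' (S : ContinuousMultilinearMap ℝ E (StrongDual ℝ F)) :
    0 ≤ quasiTauNorm p q S :=
  Real.sInf_nonneg fun _ hC => hC.1

lemma norm_mem {S : ContinuousMultilinearMap ℝ E (StrongDual ℝ F)} (h : QuasiTauSumming p q S) :
    QuasiTauBound p q S (quasiTauNorm p q S) := by
  have hmem := (set_isClosed (p := p) (q := q) S).csInf_mem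
    (by obtain ⟨C, hC⟩ := h; exact ⟨C, hC⟩) ⟨0, fun C hC => hC.1⟩
  exact hmem.2

lemma norm_le {S : ContinuousMultilinearMap ℝ E (StrongDual ℝ F)} {C : ℝ} (hC : 0 ≤ C)
    (hb : QuasiTauBound p q S C) : quasiTauNorm p q S ≤ C :=
  csInf_le ⟨0, fun _ hD => hD.1⟩ ⟨hC, hb⟩

lemma rpow_rpow_inv {t : ℝ} (ht : 0 ≤ t) {r : ℝ} (hr : r ≠ 0) : (t ^ r) ^ (1 / r) = t := by
  rw [← Real.rpow_mul ht, mul_one_div, div_self hr, Real.rpow_one]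

lemma bound_add (hp : 1 ≤ p) {S T : ContinuousMultilinearMap ℝ E (StrongDual ℝ F)} {C D : ℝ}
    (hS : QuasiTauBound p q S C) (hT : QuasiTauBound p q T D) :
    QuasiTauBound p q (S + T) (C + D) := by
  intro m x y
  calc (∑ j ∈ Finset.range m, |(S + T) (x j) (y j)| ^ p) ^ (1 / p)
      = (∑ j ∈ Finset.range m, |S (x j) (y j) + T (x j) (y j)| ^ p) ^ (1 / p) := by
        simp only [ContinuousMultilinearMap.add_apply, ContinuousLinearMap.add_apply]
    _ ≤ (∑ j ∈ Finset.range m, |S (x j) (y j)| ^ p) ^ (1 / p) +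
        (∑ j ∈ Finset.range m, |T (x j) (y j)| ^ p) ^ (1 / p) := Real.Lp_add_le _ _ _ hp
    _ ≤ C * qtSup q x y m + D * qtSup q x y m := add_le_add (hS m x y) (hT m x y)
    _ = (C + D) * qtSup q x y m := (add_mul _ _ _).symm

lemma bound_neg {S : ContinuousMultilinearMap ℝ E (StrongDual ℝ F)} {C : ℝ}
    (h : QuasiTauBound p q S C) : QuasiTauBound p q (-S) C := by
  intro m x y
  have := h m x y
  simpa only [ContinuousMultilinearMap.neg_apply, ContinuousLinearMap.neg_apply, abs_neg]
    using this

lemma bound_smul (hp : 1 ≤ p) {S : ContinuousMultilinearMap ℝ E (StrongDual ℝ F)} {C : ℝ}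
    (h : QuasiTauBound p q S C) (c : ℝ) : QuasiTauBound p q (c • S) (|c| * C) := by
  intro m x y
  have hp0 : p ≠ 0 := by positivity
  calc (∑ j ∈ Finset.range m, |(c • S) (x j) (y j)| ^ p) ^ (1 / p)
      = (|c| ^ p * ∑ j ∈ Finset.range m, |S (x j) (y j)| ^ p) ^ (1 / p) := by
        rw [Finset.mul_sum]
        congr 1
        refine Finset.sum_congr rfl fun j _ => ?_
        rw [ContinuousMultilinearMap.smul_apply, ContinuousLinearMap.smul_apply, smul_eq_mul,
          abs_mul, Real.mul_rpow (abs_nonneg _) (abs_nonneg _)]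
    _ = (|c| ^ p) ^ (1 / p) * (∑ j ∈ Finset.range m, |S (x j) (y j)| ^ p) ^ (1 / p) := by
        rw [Real.mul_rpow (Real.rpow_nonneg (abs_nonneg _) _)
          (Finset.sum_nonneg fun j _ => Real.rpow_nonneg (abs_nonneg _) _)]
    _ = |c| * (∑ j ∈ Finset.range m, |S (x j) (y j)| ^ p) ^ (1 / p) := by
        rw [rpow_rpow_inv (abs_nonneg _) hp0]
    _ ≤ |c| * (C * qtSup q x y m) := mul_le_mul_of_nonneg_left (h m x y) (abs_nonneg _)
    _ = |c| * C * qtSup q x y m := (mul_assoc _ _ _).symm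

lemma single_le (hp : 1 ≤ p) (hq : 1 ≤ q) {S : ContinuousMultilinearMap ℝ E (StrongDual ℝ F)} {C : ℝ}
    (hC : 0 ≤ C) (h : QuasiTauBound p q S C) (a : ∀ i, E i) (b : F) :
    |S a b| ≤ C * ((∏ i, ‖a i‖) * ‖b‖) := by
  have hp0 : p ≠ 0 := by positivity
  have hq0 : q ≠ 0 := by positivity
  have h1 := h 1 (fun _ => a) (fun _ => b)
  rw [Finset.sum_range_one, rpow_rpow_inv (abs_nonneg _) hp0] at h1
  refine h1.trans (mul_le_mul_of_nonneg_left ?_ hC)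
  have hbd : 0 ≤ (∏ i, ‖a i‖) * ‖b‖ :=
    mul_nonneg (Finset.prod_nonneg fun i _ => norm_nonneg _) (norm_nonneg _)
  refine Real.iSup_le (fun x' => Real.iSup_le (fun y' => ?_) hbd) hbd
  rw [Finset.sum_range_one, rpow_rpow_inv (abs_nonneg _) hq0]
  calc |(∏ i, (x' i).1 (a i)) * y'.1 b| = (∏ i, |(x' i).1 (a i)|) * |y'.1 b| := by
        rw [abs_mul, Finset.abs_prod]
    _ ≤ (∏ i, ‖a i‖) * ‖b‖ := by
        refine mul_le_mul ?_ ?_ (abs_nonneg _) (Finset.prod_nonneg fun i _ => norm_nonneg _)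
        · refine Finset.prod_le_prod (fun i _ => abs_nonneg _) fun i _ => ?_
          calc |(x' i).1 (a i)| = ‖(x' i).1 (a i)‖ := (Real.norm_eq_abs _).symm
            _ ≤ ‖(x' i).1‖ * ‖a i‖ := (x' i).1.le_opNorm (a i)
            _ ≤ 1 * ‖a i‖ := mul_le_mul_of_nonneg_right (x' i).2 (norm_nonneg _)
            _ = ‖a i‖ := one_mul _
        · calc |y'.1 b| = ‖y'.1 b‖ := (Real.norm_eq_abs _).symm
            _ ≤ ‖y'.1‖ * ‖b‖ := y'.1.le_opNorm b
            _ ≤ 1 * ‖b‖ := mul_le_mul_of_nonneg_right y'.2 (norm_nonneg _)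
            _ = ‖b‖ := one_mul _

lemma opNorm_le (hp : 1 ≤ p) (hq : 1 ≤ q) {S : ContinuousMultilinearMap ℝ E (StrongDual ℝ F)} {C : ℝ}
    (hC : 0 ≤ C) (h : QuasiTauBound p q S C) : ‖S‖ ≤ C := by
  refine ContinuousMultilinearMap.opNorm_le_bound hC fun a => ?_
  refine ContinuousLinearMap.opNorm_le_bound _
    (mul_nonneg hC (Finset.prod_nonneg fun i _ => norm_nonneg _)) fun b => ?_
  rw [Real.norm_eq_abs]
  calc |S a b| ≤ C * ((∏ i, ‖a i‖) * ‖b‖) := single_le hp hq hC h a b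
    _ = (C * ∏ i, ‖a i‖) * ‖b‖ := (mul_assoc _ _ _).symm

lemma norm_zero (hp0 : p ≠ 0) :
    quasiTauNorm p q (0 : ContinuousMultilinearMap ℝ E (StrongDual ℝ F)) = 0 := by
  refine le_antisymm (norm_le le_rfl ?_) (norm_nonneg' _)
  intro m x y
  have : ∀ j ∈ Finset.range m,
      |(0 : ContinuousMultilinearMap ℝ E (StrongDual ℝ F)) (x j) (y j)| ^ p = 0 := by
    intro j _
    simp [Real.zero_rpow hp0]
  rw [Finset.sum_congr rfl this, Finset.sum_const, smul_zero, Real.zero_rpow (by positivity),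
    zero_mul]

end QuasiTauAux

open QuasiTauAux

theorem quasiTauSumming_is_Banach_space (p q : ℝ) (hq : 1 ≤ q) (hqp : q ≤ p) :
    -- the norm vanishes only at 0
    (∀ S : ContinuousMultilinearMap ℝ E (StrongDual ℝ F),
      QuasiTauSumming p q S → (quasiTauNorm p q S = 0 ↔ S = 0)) ∧
    -- closed under addition, with the triangle inequality
    (∀ S T : ContinuousMultilinearMap ℝ E (StrongDual ℝ F),
      QuasiTauSumming p q S → QuasiTauSumming p q T →
      QuasiTauSumming p q (S + T) ∧
        quasiTauNorm p q (S + T) ≤ quasiTauNorm p q S + quasiTauNorm p q T) ∧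
    -- closed under scalar multiplication, with absolute homogeneity
    (∀ (c : ℝ) (S : ContinuousMultilinearMap ℝ E (StrongDual ℝ F)),
      QuasiTauSumming p q S →
      QuasiTauSumming p q (c • S) ∧ quasiTauNorm p q (c • S) = |c| * quasiTauNorm p q S) ∧
    -- completeness
    (∀ S : ℕ → ContinuousMultilinearMap ℝ E (StrongDual ℝ F),
      (∀ k, QuasiTauSumming p q (S k)) →
      (∀ ε : ℝ, 0 < ε → ∃ N : ℕ, ∀ k ≥ N, ∀ l ≥ N, quasiTauNorm p q (S k - S l) < ε) →
      ∃ T : ContinuousMultilinearMap ℝ E (StrongDual ℝ F), QuasiTauSumming p q T ∧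
        Tendsto (fun k => quasiTauNorm p q (S k - T)) atTop (nhds 0)) := by
  have hp : 1 ≤ p := hq.trans hqp
  have hp0 : p ≠ 0 := by positivity
  refine ⟨?_, ?_, ?_, ?_⟩
  · -- norm vanishes iff S = 0
    intro S hS
    constructor
    · intro h0
      have hb : QuasiTauBound p q S 0 := by
        have := norm_mem hS
        rwa [h0] at this
      ext a b
      have := single_le hp hq le_rfl hb a b
      rw [zero_mul] at this
      have h2 : |S a b| = 0 := le_antisymm this (abs_nonneg _)
      simpa using abs_eq_zero.mp h2
    · rintro rfl
      exact norm_zero hp0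
  · -- addition
    intro S T hS hT
    have hsum : QuasiTauSumming p q (S + T) :=
      ⟨quasiTauNorm p q S + quasiTauNorm p q T,
        add_nonneg (QuasiTauAux.norm_nonneg' S) (QuasiTauAux.norm_nonneg' T),
        bound_add hp (norm_mem hS) (norm_mem hT)⟩
    exact ⟨hsum, norm_le (add_nonneg (QuasiTauAux.norm_nonneg' S) (QuasiTauAux.norm_nonneg' T))
      (bound_add hp (norm_mem hS) (norm_mem hT))⟩
  · -- scalar multiplication
    intro c S hS
    have hcs : QuasiTauSumming p q (c • S) :=
      ⟨|c| * quasiTauNorm p q S, mul_nonneg (abs_nonneg _) (QuasiTauAux.norm_nonneg' S),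
        bound_smul hp (norm_mem hS) c⟩
    refine ⟨hcs, ?_⟩
    rcases eq_or_ne c 0 with rfl | hc
    · rw [(by ext; simp : (0:ℝ) • S = 0), norm_zero hp0, abs_zero, zero_mul]
    · refine le_antisymm
        (norm_le (mul_nonneg (abs_nonneg _) (QuasiTauAux.norm_nonneg' S)) (bound_smul hp (norm_mem hS) c)) ?_
      have h1 : quasiTauNorm p q S ≤ |c|⁻¹ * quasiTauNorm p q (c • S) := by
        have hb := bound_smul hp (norm_mem hcs) c⁻¹
        rw [smul_smul, inv_mul_cancel₀ hc, one_smul, abs_inv] at hb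
        exact norm_le (mul_nonneg (by positivity) (QuasiTauAux.norm_nonneg' _)) hb
      calc |c| * quasiTauNorm p q S ≤ |c| * (|c|⁻¹ * quasiTauNorm p q (c • S)) :=
            mul_le_mul_of_nonneg_left h1 (abs_nonneg _)
        _ = quasiTauNorm p q (c • S) := by
            rw [← mul_assoc, mul_inv_cancel₀ (abs_ne_zero.mpr hc), one_mul]
  · -- completeness
    intro S hS hC
    have hsub : ∀ k l, QuasiTauSumming p q (S k - S l) := by
      intro k l
      refine ⟨quasiTauNorm p q (S k) + quasiTauNorm p q (S l),
        add_nonneg (QuasiTauAux.norm_nonneg' _) (QuasiTauAux.norm_nonneg' _), ?_⟩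
      rw [show S k - S l = S k + -S l from sub_eq_add_neg (S k) (S l)]
      exact bound_add hp (norm_mem (hS k)) (bound_neg (norm_mem (hS l)))
    have hople : ∀ k l, ‖S k - S l‖ ≤ quasiTauNorm p q (S k - S l) := fun k l =>
      opNorm_le hp hq (QuasiTauAux.norm_nonneg' _) (norm_mem (hsub k l))
    -- Cauchy in operator norm
    have hcs : CauchySeq S := by
      rw [Metric.cauchySeq_iff (u := S)]
      intro ε hε
      obtain ⟨N, hN⟩ := hC ε hε
      refine ⟨N, fun k hk l hl => ?_⟩
      rw [dist_eq_norm (S k) (S l)]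
      exact lt_of_le_of_lt (hople k l) (hN k hk l hl)
    obtain ⟨T, hT⟩ := cauchySeq_tendsto_of_complete hcs
    -- pointwise convergence
    have hnorm0 : Tendsto (fun l => ‖S l - T‖) atTop (nhds 0) := by
      exact (tendsto_iff_norm_sub_tendsto_zero (f := S) (b := T)).mp hT
    have hpt : ∀ (a : ∀ i, E i) (b : F), Tendsto (fun l => S l a b) atTop (nhds (T a b)) := by
      intro a b
      rw [tendsto_iff_dist_tendsto_zero]
      refine squeeze_zero (fun l => dist_nonneg) (fun l => ?_)
        (by simpa using hnorm0.mul_const ((∏ i, ‖a i‖) * ‖b‖))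
      rw [Real.dist_eq]
      calc |S l a b - T a b| = ‖(S l - T) a b‖ := by
            simp [ContinuousMultilinearMap.sub_apply, ContinuousLinearMap.sub_apply,
              Real.norm_eq_abs]
        _ ≤ ‖(S l - T) a‖ * ‖b‖ := ((S l - T) a).le_opNorm b
        _ ≤ (‖S l - T‖ * ∏ i, ‖a i‖) * ‖b‖ :=
            mul_le_mul_of_nonneg_right ((S l - T).le_opNorm a) (norm_nonneg _)
        _ = ‖S l - T‖ * ((∏ i, ‖a i‖) * ‖b‖) := mul_assoc _ _ _
    -- the key band estimate
    have hband : ∀ ε : ℝ, 0 < ε → ∃ N, ∀ k ≥ N, QuasiTauBound p q (S k - T) ε := by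
      intro ε hε
      obtain ⟨N, hN⟩ := hC ε hε
      refine ⟨N, fun k hk m x y => ?_⟩
      have hle : ∀ l ≥ N,
          (∑ j ∈ Finset.range m, |(S k - S l) (x j) (y j)| ^ p) ^ (1 / p) ≤
            ε * qtSup q x y m := by
        intro l hl
        refine (norm_mem (hsub k l) m x y).trans ?_
        exact mul_le_mul_of_nonneg_right (le_of_lt (hN k hk l hl)) (qtSup_nonneg q x y m)
      have htend : Tendsto
          (fun l => (∑ j ∈ Finset.range m, |(S k - S l) (x j) (y j)| ^ p) ^ (1 / p)) atTop
          (nhds ((∑ j ∈ Finset.range m, |(S k - T) (x j) (y j)| ^ p) ^ (1 / p))) := by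
        refine Tendsto.rpow_const ?_ (Or.inr (by positivity))
        refine tendsto_finset_sum _ fun j _ => ?_
        refine Tendsto.rpow_const ?_ (Or.inr (by positivity))
        refine Tendsto.abs ?_
        simp only [ContinuousMultilinearMap.sub_apply, ContinuousLinearMap.sub_apply]
        exact tendsto_const_nhds.sub (hpt (x j) (y j))
      exact le_of_tendsto htend (eventually_atTop.2 ⟨N, hle⟩)
    refine ⟨T, ?_, ?_⟩
    · -- T is quasi-tau-summing
      obtain ⟨N1, hN1⟩ := hband 1 one_pos
      refine ⟨quasiTauNorm p q (S N1) + 1, add_nonneg (QuasiTauAux.norm_nonneg' _) zero_le_one, ?_⟩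
      have hb := bound_add hp (norm_mem (hS N1)) (bound_neg (hN1 N1 le_rfl))
      rwa [show S N1 + -(S N1 - T) = T by abel] at hb
    · -- convergence of the norms
      rw [Metric.tendsto_atTop]
      intro ε hε
      obtain ⟨N, hN⟩ := hband (ε / 2) (half_pos hε)
      refine ⟨N, fun k hk => ?_⟩
      have h1 : quasiTauNorm p q (S k - T) ≤ ε / 2 :=
        norm_le (half_pos hε).le (hN k hk)
      rw [Real.dist_eq, sub_zero, abs_of_nonneg (QuasiTauAux.norm_nonneg' _)]
      linarith

end
end

section
/- If 1/q ≤ 1/q_1 + ... + 1/q_n + 1/q_{n+1} and S : E_1 × ... × E_n → F' is quasi-τ(p;q)-summing, then the (n+1)-linear functional S_F(x_1,...,x_n,y) = S(x_1,...,x_n)(y) is absolutely (p; q_1,...,q_n,q_{n+1})-summing. -/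
open Filter NormedSpace MeasureTheory
open scoped ENNReal

noncomputable section

variable {n : ℕ} {E : Fin n → Type*} [∀ i, NormedAddCommGroup (E i)] [∀ i, NormedSpace ℝ (E i)]
variable {F : Type*} [NormedAddCommGroup F] [NormedSpace ℝ F]

/-- `∑ d^t ≤ (∑ d)^t` for nonneg `d` and `t ≥ 1`. -/
lemma aux_sum_rpow_le_rpow_sum {ι : Type*} (s : Finset ι) (d : ι → ℝ)
    (hd : ∀ j ∈ s, 0 ≤ d j) {t : ℝ} (ht : 1 ≤ t) :
    ∑ j ∈ s, d j ^ t ≤ (∑ j ∈ s, d j) ^ t := by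
  have hsum : 0 ≤ ∑ j ∈ s, d j := Finset.sum_nonneg hd
  rcases eq_or_lt_of_le hsum with h0 | hpos
  · have hz : ∀ j ∈ s, d j = 0 := (Finset.sum_eq_zero_iff_of_nonneg hd).mp h0.symm
    rw [Finset.sum_congr rfl (fun j hj => by rw [hz j hj, Real.zero_rpow (by linarith : t ≠ 0)]),
      Finset.sum_const_zero, ← h0, Real.zero_rpow (by linarith : t ≠ 0)]
  · calc ∑ j ∈ s, d j ^ t ≤ ∑ j ∈ s, d j * (∑ k ∈ s, d k) ^ (t - 1) := by
          refine Finset.sum_le_sum fun j hj => ?_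
          have h1 : d j ^ t = d j ^ (1 + (t - 1)) := by ring_nf
          rw [h1, Real.rpow_add' (hd j hj) (by linarith), Real.rpow_one]
          exact mul_le_mul_of_nonneg_left
            (Real.rpow_le_rpow (hd j hj) (Finset.single_le_sum hd hj) (by linarith)) (hd j hj)
      _ = (∑ j ∈ s, d j) * (∑ k ∈ s, d k) ^ (t - 1) := by rw [← Finset.sum_mul]
      _ = (∑ j ∈ s, d j) ^ t := by
          nth_rewrite 1 [← Real.rpow_one (∑ j ∈ s, d j)]
          rw [← Real.rpow_add hpos]; norm_num

/-- ℓ^p monotonicity: `(∑ c^u)^(1/u) ≤ (∑ c^r)^(1/r)` for `0 < r ≤ u`, `c` nonneg. -/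
lemma aux_lp_mono {ι : Type*} (s : Finset ι) (c : ι → ℝ) (hc : ∀ j ∈ s, 0 ≤ c j)
    {r u : ℝ} (hr : 0 < r) (hru : r ≤ u) :
    (∑ j ∈ s, c j ^ u) ^ (1 / u) ≤ (∑ j ∈ s, c j ^ r) ^ (1 / r) := by
  have hu : 0 < u := lt_of_lt_of_le hr hru
  have key : ∑ j ∈ s, c j ^ u ≤ (∑ j ∈ s, c j ^ r) ^ (u / r) := by
    have := aux_sum_rpow_le_rpow_sum s (fun j => c j ^ r)
      (fun j hj => Real.rpow_nonneg (hc j hj) r) (t := u / r) ((one_le_div hr).mpr hru)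
    calc ∑ j ∈ s, c j ^ u = ∑ j ∈ s, (c j ^ r) ^ (u / r) := by
          refine Finset.sum_congr rfl fun j hj => ?_
          rw [← Real.rpow_mul (hc j hj)]
          congr 1
          field_simp
      _ ≤ _ := this
  have h1 : 0 ≤ ∑ j ∈ s, c j ^ u := Finset.sum_nonneg fun j hj => Real.rpow_nonneg (hc j hj) u
  calc (∑ j ∈ s, c j ^ u) ^ (1 / u) ≤ ((∑ j ∈ s, c j ^ r) ^ (u / r)) ^ (1 / u) :=
        Real.rpow_le_rpow h1 key (by positivity)
    _ = (∑ j ∈ s, c j ^ r) ^ (1 / r) := by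
        rw [← Real.rpow_mul (Finset.sum_nonneg fun j hj => Real.rpow_nonneg (hc j hj) r)]
        congr 1
        field_simp


/-- Generalized Hölder with weights summing to 1:
`∑_j ∏_i a i j ≤ ∏_i (∑_j a i j ^ (1/w i)) ^ (w i)`. -/
lemma aux_holder_eq {ι κ : Type*} (t : Finset ι) (s : Finset κ) (a : ι → κ → ℝ)
    (ha : ∀ i ∈ t, ∀ j ∈ s, 0 ≤ a i j) (w : ι → ℝ) (hw : ∀ i ∈ t, 0 < w i)
    (hw1 : ∑ i ∈ t, w i = 1) :
    ∑ j ∈ s, ∏ i ∈ t, a i j ≤ ∏ i ∈ t, (∑ j ∈ s, a i j ^ (1 / w i)) ^ w i := by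
  by_cases hz : ∃ i ∈ t, ∑ j ∈ s, a i j ^ (1 / w i) = 0
  · obtain ⟨i, hit, hi⟩ := hz
    have hzero : ∀ j ∈ s, a i j = 0 := by
      intro j hj
      have h1 : a i j ^ (1 / w i) = 0 :=
        (Finset.sum_eq_zero_iff_of_nonneg fun k hk =>
          Real.rpow_nonneg (ha i hit k hk) _).mp hi j hj
      have h2 : 1 / w i ≠ 0 := one_div_ne_zero (hw i hit).ne'
      exact (Real.rpow_eq_zero (ha i hit j hj) h2).mp h1
    have hL : ∑ j ∈ s, ∏ i' ∈ t, a i' j = 0 :=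
      Finset.sum_eq_zero fun j hj => Finset.prod_eq_zero hit (hzero j hj)
    have hR : (∏ i' ∈ t, (∑ j ∈ s, a i' j ^ (1 / w i')) ^ w i') = 0 :=
      Finset.prod_eq_zero hit (by rw [hi, Real.zero_rpow (hw i hit).ne'])
    rw [hL, hR]
  · push_neg at hz
    set Sm : ι → ℝ := fun i => ∑ j ∈ s, a i j ^ (1 / w i) with hSm
    have hSnonneg : ∀ i ∈ t, 0 ≤ Sm i := fun i hi =>
      Finset.sum_nonneg fun j hj => Real.rpow_nonneg (ha i hi j hj) _
    have hSpos : ∀ i ∈ t, 0 < Sm i := fun i hi => lt_of_le_of_ne (hSnonneg i hi) (Ne.symm (hz i hi))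
    set N : ι → ℝ := fun i => Sm i ^ w i with hN
    have hNpos : ∀ i ∈ t, 0 < N i := fun i hi => Real.rpow_pos_of_pos (hSpos i hi) _
    -- N i ^ (1/w i) = Sm i
    have hNS : ∀ i ∈ t, N i ^ (1 / w i) = Sm i := by
      intro i hi
      rw [hN, ← Real.rpow_mul (hSnonneg i hi), mul_one_div_cancel (hw i hi).ne',
        Real.rpow_one]
    set b : ι → κ → ℝ := fun i j => a i j / N i with hb
    have hbnonneg : ∀ i ∈ t, ∀ j ∈ s, 0 ≤ b i j := fun i hi j hj =>
      div_nonneg (ha i hi j hj) (hNpos i hi).le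
    have hbsum : ∀ i ∈ t, ∑ j ∈ s, b i j ^ (1 / w i) = 1 := by
      intro i hi
      have heq : ∀ j ∈ s, b i j ^ (1 / w i) = a i j ^ (1 / w i) / Sm i := by
        intro j hj
        rw [hb]
        simp only
        rw [Real.div_rpow (ha i hi j hj) (hNpos i hi).le, hNS i hi]
      rw [Finset.sum_congr rfl heq, ← Finset.sum_div, div_self (hSpos i hi).ne']
    have key : ∑ j ∈ s, ∏ i ∈ t, b i j ≤ 1 := by
      have hj1 : ∀ j ∈ s, ∏ i ∈ t, b i j ≤ ∑ i ∈ t, w i * b i j ^ (1 / w i) := by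
        intro j hj
        have hgm := Real.geom_mean_le_arith_mean_weighted t w (fun i => b i j ^ (1 / w i))
          (fun i hi => (hw i hi).le) hw1 (fun i hi => Real.rpow_nonneg (hbnonneg i hi j hj) _)
        calc ∏ i ∈ t, b i j = ∏ i ∈ t, (b i j ^ (1 / w i)) ^ w i := by
              refine Finset.prod_congr rfl fun i hi => ?_
              rw [← Real.rpow_mul (hbnonneg i hi j hj), one_div_mul_cancel (hw i hi).ne',
                Real.rpow_one]
          _ ≤ _ := hgm
      calc ∑ j ∈ s, ∏ i ∈ t, b i j ≤ ∑ j ∈ s, ∑ i ∈ t, w i * b i j ^ (1 / w i) :=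
            Finset.sum_le_sum hj1
        _ = ∑ i ∈ t, w i * ∑ j ∈ s, b i j ^ (1 / w i) := by
            rw [Finset.sum_comm]
            exact Finset.sum_congr rfl fun i hi => (Finset.mul_sum ..).symm
        _ = ∑ i ∈ t, w i := Finset.sum_congr rfl fun i hi => by rw [hbsum i hi, mul_one]
        _ = 1 := hw1
    calc ∑ j ∈ s, ∏ i ∈ t, a i j = ∑ j ∈ s, (∏ i ∈ t, N i) * ∏ i ∈ t, b i j := by
          refine Finset.sum_congr rfl fun j hj => ?_
          rw [← Finset.prod_mul_distrib]
          refine Finset.prod_congr rfl fun i hi => ?_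
          rw [hb]
          simp only
          rw [mul_div_cancel₀ _ (hNpos i hi).ne']
      _ = (∏ i ∈ t, N i) * ∑ j ∈ s, ∏ i ∈ t, b i j := by rw [Finset.mul_sum]
      _ ≤ (∏ i ∈ t, N i) * 1 :=
          mul_le_mul_of_nonneg_left key (Finset.prod_nonneg fun i hi => (hNpos i hi).le)
      _ = ∏ i ∈ t, N i := mul_one _

/-- Generalized Hölder inequality on finsets with `1/q ≤ ∑ 1/r i`. -/
lemma aux_holder_general {ι κ : Type*} (t : Finset ι) (s : Finset κ) (a : ι → κ → ℝ)
    (ha : ∀ i ∈ t, ∀ j ∈ s, 0 ≤ a i j) (r : ι → ℝ) (hr : ∀ i ∈ t, 0 < r i)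
    {q : ℝ} (hq : 0 < q) (hsum : 1 / q ≤ ∑ i ∈ t, 1 / r i) :
    (∑ j ∈ s, (∏ i ∈ t, a i j) ^ q) ^ (1 / q) ≤
      ∏ i ∈ t, (∑ j ∈ s, a i j ^ r i) ^ (1 / r i) := by
  set s0 : ℝ := ∑ i ∈ t, 1 / r i with hs0def
  have hs0 : 0 < s0 := lt_of_lt_of_le (by positivity) hsum
  have hr0q : 1 / s0 ≤ q := by
    have := one_div_le_one_div_of_le (by positivity : (0:ℝ) < 1 / q) hsum
    rwa [one_div_one_div] at this
  have hprod_nonneg : ∀ j ∈ s, 0 ≤ ∏ i ∈ t, a i j :=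
    fun j hj => Finset.prod_nonneg fun i hi => ha i hi j hj
  have step1 : (∑ j ∈ s, (∏ i ∈ t, a i j) ^ q) ^ (1 / q) ≤
      (∑ j ∈ s, (∏ i ∈ t, a i j) ^ (1 / s0)) ^ (1 / (1 / s0)) :=
    aux_lp_mono s _ hprod_nonneg (by positivity) hr0q
  rw [one_div_one_div] at step1
  refine step1.trans ?_
  -- apply the equality-case Hölder to `a i j ^ (1/s0)` with weights `(1/r i)/s0`
  have key : ∑ j ∈ s, (∏ i ∈ t, a i j) ^ (1 / s0) ≤
      ∏ i ∈ t, (∑ j ∈ s, a i j ^ r i) ^ (1 / (r i * s0)) := by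
    have h1 : ∀ j ∈ s, (∏ i ∈ t, a i j) ^ (1 / s0) = ∏ i ∈ t, a i j ^ (1 / s0) :=
      fun j hj => (Real.finset_prod_rpow t _ (fun i hi => ha i hi j hj) _).symm
    rw [Finset.sum_congr rfl h1]
    have := aux_holder_eq t s (fun i j => a i j ^ (1 / s0))
      (fun i hi j hj => Real.rpow_nonneg (ha i hi j hj) _)
      (fun i => 1 / (r i * s0))
      (fun i hi => by have := hr i hi; positivity)
      (by
        have he : ∑ i ∈ t, 1 / (r i * s0) = ∑ i ∈ t, (1 / r i) / s0 :=
          Finset.sum_congr rfl fun i hi => (div_div 1 (r i) s0).symm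
        rw [he, ← Finset.sum_div, ← hs0def, div_self hs0.ne'])
    refine this.trans (le_of_eq ?_)
    refine Finset.prod_congr rfl fun i hi => ?_
    congr 1
    refine Finset.sum_congr rfl fun j hj => ?_
    rw [← Real.rpow_mul (ha i hi j hj)]
    congr 1
    rw [one_div_one_div]
    have h1 : r i ≠ 0 := (hr i hi).ne'
    field_simp
  have hmidnonneg : 0 ≤ ∑ j ∈ s, (∏ i ∈ t, a i j) ^ (1 / s0) :=
    Finset.sum_nonneg fun j hj => Real.rpow_nonneg (hprod_nonneg j hj) _
  calc (∑ j ∈ s, (∏ i ∈ t, a i j) ^ (1 / s0)) ^ s0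
      ≤ (∏ i ∈ t, (∑ j ∈ s, a i j ^ r i) ^ (1 / (r i * s0))) ^ s0 :=
        Real.rpow_le_rpow hmidnonneg key hs0.le
    _ = ∏ i ∈ t, (∑ j ∈ s, a i j ^ r i) ^ (1 / r i) := by
        rw [← Real.finset_prod_rpow t _ (fun i hi => Real.rpow_nonneg
          (Finset.sum_nonneg fun j hj => Real.rpow_nonneg (ha i hi j hj) _) _) s0]
        refine Finset.prod_congr rfl fun i hi => ?_
        rw [← Real.rpow_mul (Finset.sum_nonneg fun j hj => Real.rpow_nonneg (ha i hi j hj) _)]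
        congr 1
        have h1 : r i ≠ 0 := (hr i hi).ne'
        field_simp

theorem quasiTauSumming_absolutely_summing (p q : ℝ) (hq : 1 ≤ q) (hqp : q ≤ p)
    (qv : Fin n → ℝ) (qlast : ℝ) (hqv : ∀ i, 1 ≤ qv i) (hqlast : 1 ≤ qlast)
    (hHolder : 1 / q ≤ (∑ i, 1 / qv i) + 1 / qlast)
    (S : ContinuousMultilinearMap ℝ E (StrongDual ℝ F)) (hS : QuasiTauSumming p q S) :
    ∃ C : ℝ, 0 ≤ C ∧ ∀ (m : ℕ) (x : ℕ → ∀ i, E i) (y : ℕ → F),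
      (∑ j ∈ Finset.range m, |S (x j) (y j)| ^ p) ^ (1 / p) ≤
        C * (∏ i, ⨆ x' : {f : StrongDual ℝ (E i) // ‖f‖ ≤ 1},
              (∑ j ∈ Finset.range m, |x'.1 (x j i)| ^ qv i) ^ (1 / qv i)) *
          ⨆ y' : {f : StrongDual ℝ F // ‖f‖ ≤ 1},
              (∑ j ∈ Finset.range m, |y'.1 (y j)| ^ qlast) ^ (1 / qlast) := by
  obtain ⟨C, hC0, hC⟩ := hS
  refine ⟨C, hC0, fun m x y => ?_⟩
  haveI hne : ∀ i, Nonempty {f : StrongDual ℝ (E i) // ‖f‖ ≤ 1} := fun i => ⟨⟨0, by simp⟩⟩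
  haveI hneF : Nonempty {f : StrongDual ℝ F // ‖f‖ ≤ 1} := ⟨⟨0, by simp⟩⟩
  -- boundedness of the weak-ℓ^q ranges
  have hbddA : ∀ i, BddAbove (Set.range fun x' : {f : StrongDual ℝ (E i) // ‖f‖ ≤ 1} =>
      (∑ j ∈ Finset.range m, |x'.1 (x j i)| ^ qv i) ^ (1 / qv i)) := by
    intro i
    refine ⟨(∑ j ∈ Finset.range m, ‖x j i‖ ^ qv i) ^ (1 / qv i), ?_⟩
    rintro _ ⟨x', rfl⟩
    refine Real.rpow_le_rpow (Finset.sum_nonneg fun j _ => Real.rpow_nonneg (abs_nonneg _) _)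
      (Finset.sum_le_sum fun j _ => Real.rpow_le_rpow (abs_nonneg _) ?_
        (by linarith [hqv i])) (by have := hqv i; positivity)
    calc |x'.1 (x j i)| = ‖x'.1 (x j i)‖ := rfl
      _ ≤ ‖x'.1‖ * ‖x j i‖ := (x'.1).le_opNorm _
      _ ≤ 1 * ‖x j i‖ := mul_le_mul_of_nonneg_right x'.2 (norm_nonneg _)
      _ = ‖x j i‖ := one_mul _
  have hbddB : BddAbove (Set.range fun y' : {f : StrongDual ℝ F // ‖f‖ ≤ 1} =>
      (∑ j ∈ Finset.range m, |y'.1 (y j)| ^ qlast) ^ (1 / qlast)) := by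
    refine ⟨(∑ j ∈ Finset.range m, ‖y j‖ ^ qlast) ^ (1 / qlast), ?_⟩
    rintro _ ⟨y', rfl⟩
    refine Real.rpow_le_rpow (Finset.sum_nonneg fun j _ => Real.rpow_nonneg (abs_nonneg _) _)
      (Finset.sum_le_sum fun j _ => Real.rpow_le_rpow (abs_nonneg _) ?_
        (by linarith)) (by have := hqlast; positivity)
    calc |y'.1 (y j)| = ‖y'.1 (y j)‖ := rfl
      _ ≤ ‖y'.1‖ * ‖y j‖ := (y'.1).le_opNorm _
      _ ≤ 1 * ‖y j‖ := mul_le_mul_of_nonneg_right y'.2 (norm_nonneg _)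
      _ = ‖y j‖ := one_mul _
  set A : Fin n → ℝ := fun i => ⨆ x' : {f : StrongDual ℝ (E i) // ‖f‖ ≤ 1},
    (∑ j ∈ Finset.range m, |x'.1 (x j i)| ^ qv i) ^ (1 / qv i) with hA
  set B : ℝ := ⨆ y' : {f : StrongDual ℝ F // ‖f‖ ≤ 1},
    (∑ j ∈ Finset.range m, |y'.1 (y j)| ^ qlast) ^ (1 / qlast) with hB
  have hAnonneg : ∀ i, 0 ≤ A i := fun i =>
    (Real.rpow_nonneg (Finset.sum_nonneg fun j _ => Real.rpow_nonneg (abs_nonneg _) _) _).trans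
      (le_ciSup (hbddA i) (Classical.arbitrary _))
  have hBnonneg : 0 ≤ B :=
    (Real.rpow_nonneg (Finset.sum_nonneg fun j _ => Real.rpow_nonneg (abs_nonneg _) _) _).trans
      (le_ciSup hbddB (Classical.arbitrary _))
  have hqt : qtSup q x y m ≤ (∏ i, A i) * B := by
    rw [qtSup]
    refine ciSup_le fun x' => ciSup_le fun y' => ?_
    set a : Fin (n + 1) → ℕ → ℝ :=
      Fin.snoc (fun i j => |(x' i).1 (x j i)|) (fun j => |y'.1 (y j)|) with ha
    set r : Fin (n + 1) → ℝ := Fin.snoc qv qlast with hr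
    have hr_pos : ∀ i ∈ Finset.univ, 0 < r i := by
      intro i _
      induction i using Fin.lastCases with
      | last => rw [hr]; simp only [Fin.snoc_last]; linarith
      | cast i => rw [hr]; simp only [Fin.snoc_castSucc]; linarith [hqv i]
    have ha_nonneg : ∀ i ∈ Finset.univ, ∀ j ∈ Finset.range m, 0 ≤ a i j := by
      intro i _ j _
      induction i using Fin.lastCases with
      | last => rw [ha]; simp only [Fin.snoc_last]; exact abs_nonneg _
      | cast i => rw [ha]; simp only [Fin.snoc_castSucc]; exact abs_nonneg _
    have hsum : 1 / q ≤ ∑ i : Fin (n + 1), 1 / r i := by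
      rw [Fin.sum_univ_castSucc]
      rw [hr]
      simp only [Fin.snoc_castSucc, Fin.snoc_last]
      exact hHolder
    have habs : ∀ j, |(∏ i, (x' i).1 (x j i)) * y'.1 (y j)| = ∏ i : Fin (n + 1), a i j := by
      intro j
      rw [Fin.prod_univ_castSucc, abs_mul, Finset.abs_prod, ha]
      simp only [Fin.snoc_castSucc, Fin.snoc_last]
    have hold := aux_holder_general Finset.univ (Finset.range m) a ha_nonneg r hr_pos
      (by linarith : (0:ℝ) < q) hsum
    have hrw : (∑ j ∈ Finset.range m, |(∏ i, (x' i).1 (x j i)) * y'.1 (y j)| ^ q) ^ (1 / q)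
        = (∑ j ∈ Finset.range m, (∏ i : Fin (n + 1), a i j) ^ q) ^ (1 / q) := by
      congr 1
      exact Finset.sum_congr rfl fun j _ => by rw [habs j]
    rw [hrw]
    refine hold.trans ?_
    rw [Fin.prod_univ_castSucc]
    have hfac : ∀ i : Fin n,
        (∑ j ∈ Finset.range m, a i.castSucc j ^ r i.castSucc) ^ (1 / r i.castSucc)
          = (∑ j ∈ Finset.range m, |(x' i).1 (x j i)| ^ qv i) ^ (1 / qv i) := by
      intro i
      rw [ha, hr]
      simp only [Fin.snoc_castSucc]
    have hlast : (∑ j ∈ Finset.range m, a (Fin.last n) j ^ r (Fin.last n)) ^ (1 / r (Fin.last n))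
        = (∑ j ∈ Finset.range m, |y'.1 (y j)| ^ qlast) ^ (1 / qlast) := by
      rw [ha, hr]
      simp only [Fin.snoc_last]
    rw [hlast, Finset.prod_congr rfl fun i _ => hfac i]
    refine mul_le_mul ?_ (le_ciSup hbddB y') (Real.rpow_nonneg
      (Finset.sum_nonneg fun j _ => Real.rpow_nonneg (abs_nonneg _) _) _)
      (Finset.prod_nonneg fun i _ => hAnonneg i)
    exact Finset.prod_le_prod
      (fun i _ => Real.rpow_nonneg (Finset.sum_nonneg fun j _ =>
        Real.rpow_nonneg (abs_nonneg _) _) _)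
      (fun i _ => le_ciSup (hbddA i) (x' i))
  calc (∑ j ∈ Finset.range m, |S (x j) (y j)| ^ p) ^ (1 / p) ≤ C * qtSup q x y m := hC m x y
    _ ≤ C * ((∏ i, A i) * B) := mul_le_mul_of_nonneg_left hqt hC0
    _ = C * (∏ i, A i) * B := (mul_assoc _ _ _).symm

end
end
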